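/- arXiv:math/0307204 — 6 statements merged into one kernel-verified Lean document; each statement's English description precedes it below -/
import Mathlib

section
/- Let a, c, d be nonnegative integers, let 0 < t₀ ≤ 1, and let B > 0 and M > 0 be real constants. Then there exist a constant C > 0 and an integer n₀ such that for all integers n ≥ n₀, all real t ∈ [t₀, 1], all real b ≥ 0 with b·√(2n) ∈ ℕ and b ≤ B, and all integers k with |k − n·t| ≤ M and k ≥ b·√(2n), the following holds: | (2k+a)! · √π · (n t)^{c+d+1/2−a} · 2^{−(2k+a)} · exp(2b²/t) / ( (k + b√(2n) + c)! · (k − b√(2n) + d)! ) − 1 | ≤ C/√n. -/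
/-
Take logarithms and apply Stirling's formula `log m! = m log m - m + (log m) / 2 + log (2π) / 2
+ O(1/m)` (with Robbins' error bound) to the three factorials. Write `2k + a = 2k (1 + a/(2k))`,
`k + j + c = k (1 + (j + c)/k)`, `k - j + d = k (1 + (d - j)/k)` and `nt = k (1 + (nt - k)/k)`:
all relative shifts are `O(1/√n)` since `j = O(√n)` and `k ≍ n`. Expanding `(1 + z) log (1 + z) = z + z²/2 + O(z³)`, the
`log k` terms and the linear terms cancel exactly, and the quadratic terms leave `-j²/k`, which
cancels the exponent `2b²/t = j²/(nt)` up to `O(1/√n)` because `|k - nt| ≤ M`. Every remaining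
term is `O(1/√n)` uniformly in the parameters, and `|x - 1| ≤ 2 |log x|` once `|log x| ≤ 1`.
-/

open Real Filter Topology Stirling
open scoped Nat

noncomputable def logStirlingApprox (x : ℝ) : ℝ := x * log x - x + log x / 2 + log (2 * π) / 2

theorem Stirling.log_stirlingSeq_le {n : ℕ} (hn : n ≠ 0) :
    log (stirlingSeq n) ≤ log √π + 1 / (12 * n) := by
  set f : ℕ → ℝ := fun m => log (stirlingSeq (m + 1)) - 1 / (12 * (m + 1 : ℕ))
  -- Robbins' bound telescopes: `f` increases to `log √π`
  have hmono : Monotone f := by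
    refine monotone_nat_of_le_succ fun m => ?_
    have h := log_stirlingSeq_sdiff_le (m + 1)
    have : (1 : ℝ) / (12 * (m + 1 : ℕ) * ((m + 1 : ℕ) + 1)) =
        1 / (12 * (m + 1 : ℕ)) - 1 / (12 * (m + 1 + 1 : ℕ)) := by
      push_cast; field_simp; ring
    simp only [f]
    linarith
  have hlim : Tendsto f atTop (𝓝 (log √π)) := by
    have h1 := ((continuousAt_log (by positivity)).tendsto).comp
      (tendsto_stirlingSeq_sqrt_pi.comp (tendsto_add_atTop_nat 1))
    have h2 : Tendsto (fun m : ℕ => 1 / (12 * ((m + 1 : ℕ) : ℝ))) atTop (𝓝 0) := by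
      convert tendsto_one_div_add_atTop_nhds_zero_nat.const_mul (1 / 12 : ℝ) using 2 <;>
        simp [field]
    rw [← sub_zero (log √π)]
    exact h1.sub h2
  obtain ⟨m, rfl⟩ := Nat.exists_eq_succ_of_ne_zero hn
  linarith [hmono.ge_of_tendsto hlim m]

theorem abs_log_factorial_sub_logStirlingApprox_le {n : ℕ} (hn : n ≠ 0) :
    |log n ! - logStirlingApprox n| ≤ 1 / (12 * n) := by
  have hlow := le_log_factorial_stirling hn
  have hup := log_stirlingSeq_le hn
  have hn0 : (0 : ℝ) < n := by positivity
  rw [log_stirlingSeq_formula, log_div hn0.ne' (exp_ne_zero 1), log_exp,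
    log_mul two_ne_zero hn0.ne', log_sqrt pi_pos.le] at hup
  rw [logStirlingApprox, abs_le]
  rw [log_mul two_ne_zero pi_ne_zero] at hlow ⊢
  constructor <;> nlinarith

theorem abs_log_one_add_le {z : ℝ} (hz : |z| ≤ 1 / 2) : |log (1 + z)| ≤ 2 * |z| := by
  have h := abs_log_sub_add_sum_range_le (x := -z) (by rw [abs_neg]; linarith) 0
  rw [abs_neg, sub_neg_eq_add] at h
  simp only [Finset.range_zero, Finset.sum_empty, zero_add, pow_one] at h
  refine h.trans ?_
  rw [div_le_iff₀ (by linarith)]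
  nlinarith [abs_nonneg z]

noncomputable def mulLogRem (z : ℝ) : ℝ := (1 + z) * log (1 + z) - z - z ^ 2 / 2

theorem abs_mulLogRem_le {z : ℝ} (hz : |z| ≤ 1 / 2) :
    |mulLogRem z| ≤ 4 * |z| ^ 3 := by
  unfold mulLogRem
  have h := abs_log_sub_add_sum_range_le (x := -z) (by rw [abs_neg]; linarith) 2
  rw [abs_neg, sub_neg_eq_add] at h
  have hrem : |log (1 + z) - z + z ^ 2 / 2| ≤ 2 * |z| ^ 3 := by
    simp only [Finset.sum_range_succ, Finset.sum_range_zero] at h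
    norm_num at h
    refine le_trans (le_of_eq ?_) (h.trans ?_)
    · ring_nf
    · rw [div_le_iff₀ (by linarith)]
      nlinarith [abs_nonneg z, pow_nonneg (abs_nonneg z) 3]
  have h1z : |1 + z| ≤ 3 / 2 := by
    rw [abs_le] at hz ⊢; constructor <;> linarith
  calc |(1 + z) * log (1 + z) - z - z ^ 2 / 2|
      = |(1 + z) * (log (1 + z) - z + z ^ 2 / 2) - z ^ 3 / 2| := by ring_nf
    _ ≤ |1 + z| * |log (1 + z) - z + z ^ 2 / 2| + |z| ^ 3 / 2 := by
        grw [abs_sub, abs_mul, abs_div, abs_pow]; norm_num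
    _ ≤ 3 / 2 * (2 * |z| ^ 3) + |z| ^ 3 / 2 := by gcongr
    _ ≤ 4 * |z| ^ 3 := by linarith [pow_nonneg (abs_nonneg z) 3]

theorem log_add_eq_log_add_log_one_add_div {K m : ℝ} (hK : 0 < K) (hm : 0 < K + m) :
    log (K + m) = log K + log (1 + m / K) := by
  rw [one_add_div hK.ne', log_div hm.ne' hK.ne']
  ring

theorem logStirlingApprox_combination_eq {a c d J K s : ℝ} (hK : 0 < K) (hs : 0 < s)
    (hN : 0 < 2 * K + a) (hp : 0 < K + J + c) (hq : 0 < K - J + d) :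
    logStirlingApprox (2 * K + a) - (2 * K + a) * log 2 + log √π + (c + d + 1 / 2 - a) * log s
        + J ^ 2 / s - logStirlingApprox (K + J + c) - logStirlingApprox (K - J + d)
      = K * (2 * mulLogRem (a / (2 * K)) - mulLogRem ((J + c) / K) - mulLogRem ((d - J) / K))
        + (log (1 + a / (2 * K)) - log (1 + (J + c) / K) - log (1 + (d - J) / K)) / 2
        + (c + d + 1 / 2 - a) * log (1 + (s - K) / K)
        + a ^ 2 / (4 * K) - J * (c - d) / K - (c ^ 2 + d ^ 2) / (2 * K)
        + J ^ 2 * (1 / s - 1 / K) := by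
  have logN := log_add_eq_log_add_log_one_add_div (by positivity : 0 < 2 * K) hN
  rw [log_mul two_ne_zero hK.ne'] at logN
  have logp : log (K + J + c) = log K + log (1 + (J + c) / K) := by
    rw [add_assoc, log_add_eq_log_add_log_one_add_div hK (by linarith)]
  have logq : log (K - J + d) = log K + log (1 + (d - J) / K) := by
    rw [sub_add_eq_add_sub, add_sub_assoc, log_add_eq_log_add_log_one_add_div hK (by linarith)]
  have logs := log_add_eq_log_add_log_one_add_div hK (m := s - K) (by linarith)
  rw [add_sub_cancel] at logs
  simp only [logStirlingApprox, mulLogRem]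
  -- after expanding around `log K`, the coefficient of `log K` is zero
  rw [logN, logp, logq, logs, log_sqrt pi_pos.le, log_mul two_ne_zero pi_ne_zero]
  field_simp
  ring

section CombinationBounds

/- `u` bounds the relative shifts `|J| / K`, `Q / K`; in the application `u ≍ 1/√n`, so the
bounds below are `O(1/√n)`. -/
variable {a c d J K s Q u : ℝ}

theorem abs_quadratic_terms_le (hK : 0 < K) (ha : |a| ≤ Q) (hc : |c| ≤ Q) (hd : |d| ≤ Q)
    (hs : |K - s| ≤ Q) (hJ : |J| ≤ K * u) (hQu : Q ≤ K * u) (hu : u ≤ 1 / 4) :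
    |a ^ 2 / (4 * K) - J * (c - d) / K - (c ^ 2 + d ^ 2) / (2 * K) + J ^ 2 * (1 / s - 1 / K)|
      ≤ 5 * Q * u := by
  have hQ : 0 ≤ Q := (abs_nonneg a).trans ha
  have hu0 : 0 ≤ u := nonneg_of_mul_nonneg_right (hQ.trans hQu) hK
  obtain ⟨hs₁, hs₂⟩ := abs_le.mp hs
  have h1 : |a ^ 2 / (4 * K)| ≤ Q * u := by
    rw [abs_div, abs_of_pos (show 0 < 4 * K by linarith), div_le_iff₀ (by linarith), abs_pow]
    nlinarith [mul_le_mul ha ha (abs_nonneg a) hQ]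
  have h2 : |J * (c - d) / K| ≤ 2 * Q * u := by
    have hcd : |c - d| ≤ 2 * Q := (abs_sub _ _).trans (by linarith)
    rw [abs_div, abs_of_pos hK, div_le_iff₀ hK, abs_mul]
    nlinarith [mul_le_mul hJ hcd (abs_nonneg _) (by positivity)]
  have h3 : |(c ^ 2 + d ^ 2) / (2 * K)| ≤ Q * u := by
    rw [abs_div, abs_of_pos (show 0 < 2 * K by linarith), div_le_iff₀ (by linarith),
      abs_of_nonneg (by positivity)]
    nlinarith [mul_le_mul hc hc (abs_nonneg c) hQ, mul_le_mul hd hd (abs_nonneg d) hQ,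
      sq_abs c, sq_abs d]
  have h4 : |J ^ 2 * (1 / s - 1 / K)| ≤ Q * u := by
    have hs0 : 3 * K / 4 ≤ s := by nlinarith
    have hsK : 0 < s * K := mul_pos (by linarith) hK
    rw [show J ^ 2 * (1 / s - 1 / K) = J ^ 2 * (K - s) / (s * K) by
      field_simp [(show 0 < s by linarith).ne', hK.ne'],
      abs_div, abs_of_pos hsK, div_le_iff₀ hsK, abs_mul, abs_pow]
    calc |J| ^ 2 * |K - s| ≤ (K * u) ^ 2 * Q := by gcongr
      _ ≤ Q * u * (3 * K / 4 * K) := by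
          linarith [mul_nonneg (mul_nonneg (mul_nonneg hQ hu0) (sq_nonneg K))
            (by linarith : 0 ≤ 3 / 4 - u)]
      _ ≤ Q * u * (s * K) := by gcongr
  rw [abs_le]
  constructor <;>
    linarith [abs_le.mp h1, abs_le.mp h2, abs_le.mp h3, abs_le.mp h4]

theorem abs_log_terms_le (hK : 0 < K) (hQ : 1 ≤ Q) (ha : |a| ≤ Q) (hc : |c| ≤ Q)
    (hd : |d| ≤ Q) (hs : |K - s| ≤ Q) (hJ : |J| ≤ K * u) (hQu : Q ≤ K * u) (hu : u ≤ 1 / 4) :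
    |K * (2 * mulLogRem (a / (2 * K)) - mulLogRem ((J + c) / K) - mulLogRem ((d - J) / K))
        + (log (1 + a / (2 * K)) - log (1 + (J + c) / K) - log (1 + (d - J) / K)) / 2
        + (c + d + 1 / 2 - a) * log (1 + (s - K) / K)|
      ≤ 13 * Q * u + 65 * K * u ^ 3 := by
  have hu0 : 0 ≤ u := nonneg_of_mul_nonneg_right (by linarith) hK
  obtain ⟨ha₁, ha₂⟩ := abs_le.mp ha
  obtain ⟨hc₁, hc₂⟩ := abs_le.mp hc
  obtain ⟨hd₁, hd₂⟩ := abs_le.mp hd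
  obtain ⟨hJ₁, hJ₂⟩ := abs_le.mp hJ
  have hα : |a / (2 * K)| ≤ u / 2 := by
    rw [abs_div, abs_of_pos (show 0 < 2 * K by linarith), div_le_iff₀ (by linarith)]
    linarith
  have hx : |(J + c) / K| ≤ 2 * u := by
    rw [abs_div, abs_of_pos hK, div_le_iff₀ hK, abs_le]; constructor <;> linarith
  have hy : |(d - J) / K| ≤ 2 * u := by
    rw [abs_div, abs_of_pos hK, div_le_iff₀ hK, abs_le]; constructor <;> linarith
  have hw : |(s - K) / K| ≤ u := by
    rw [abs_div, abs_of_pos hK, div_le_iff₀ hK, abs_sub_comm]; linarith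
  have hrem : |2 * mulLogRem (a / (2 * K)) - mulLogRem ((J + c) / K) - mulLogRem ((d - J) / K)|
      ≤ 65 * u ^ 3 := by
    have eα := abs_mulLogRem_le (hα.trans (by linarith))
    have ex := abs_mulLogRem_le (hx.trans (by linarith))
    have ey := abs_mulLogRem_le (hy.trans (by linarith))
    grw [hα] at eα
    grw [hx] at ex
    grw [hy] at ey
    rw [abs_le]
    constructor <;> linarith [abs_le.mp eα, abs_le.mp ex, abs_le.mp ey]
  have h2 : |(log (1 + a / (2 * K)) - log (1 + (J + c) / K) - log (1 + (d - J) / K)) / 2|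
      ≤ 5 * u := by
    have eα := abs_log_one_add_le (hα.trans (by linarith))
    have ex := abs_log_one_add_le (hx.trans (by linarith))
    have ey := abs_log_one_add_le (hy.trans (by linarith))
    rw [abs_le]; constructor <;> linarith [abs_le.mp eα, abs_le.mp ex, abs_le.mp ey]
  have h3 : |(c + d + 1 / 2 - a) * log (1 + (s - K) / K)| ≤ 8 * Q * u := by
    have he : |c + d + 1 / 2 - a| ≤ 4 * Q := by rw [abs_le]; constructor <;> linarith
    have hl := abs_log_one_add_le (hw.trans (by linarith))
    rw [abs_mul]
    nlinarith [mul_le_mul he (hl.trans (by linarith : 2 * |(s - K) / K| ≤ 2 * u))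
      (abs_nonneg _) (by linarith)]
  have h1 : |K * (2 * mulLogRem (a / (2 * K)) - mulLogRem ((J + c) / K)
      - mulLogRem ((d - J) / K))| ≤ 65 * K * u ^ 3 := by
    rw [abs_mul, abs_of_pos hK, mul_comm 65 K, mul_assoc]
    exact mul_le_mul_of_nonneg_left hrem hK.le
  have hQu' : u ≤ Q * u := le_mul_of_one_le_left hu0 hQ
  rw [abs_le]
  constructor <;> linarith [abs_le.mp h1, abs_le.mp h2, abs_le.mp h3]

theorem abs_logStirlingApprox_combination_le (hK : 0 < K) (hQ : 1 ≤ Q) (ha : |a| ≤ Q)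
    (hc : |c| ≤ Q) (hd : |d| ≤ Q) (hs : |K - s| ≤ Q) (hJ : |J| ≤ K * u) (hQu : Q ≤ K * u)
    (hu : u ≤ 1 / 4) :
    |logStirlingApprox (2 * K + a) - (2 * K + a) * log 2 + log √π + (c + d + 1 / 2 - a) * log s
        + J ^ 2 / s - logStirlingApprox (K + J + c) - logStirlingApprox (K - J + d)|
      ≤ 18 * Q * u + 65 * K * u ^ 3 := by
  have hKu : K * u ≤ K / 4 := by nlinarith
  obtain ⟨ha₁, ha₂⟩ := abs_le.mp ha
  obtain ⟨hc₁, hc₂⟩ := abs_le.mp hc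
  obtain ⟨hd₁, hd₂⟩ := abs_le.mp hd
  obtain ⟨hJ₁, hJ₂⟩ := abs_le.mp hJ
  rw [logStirlingApprox_combination_eq hK (by linarith [abs_le.mp hs]) (by linarith)
    (by linarith) (by linarith)]
  have hlog := abs_log_terms_le hK hQ ha hc hd hs hJ hQu hu
  have hquad := abs_quadratic_terms_le hK ha hc hd hs hJ hQu hu
  rw [abs_le] at hlog hquad ⊢
  constructor <;> linarith

end CombinationBounds

theorem abs_log_factorial_ratio_le (a c d j k : ℕ) {s Q u : ℝ} (hQ : 1 ≤ Q) (ha : (a : ℝ) ≤ Q)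
    (hc : (c : ℝ) ≤ Q) (hd : (d : ℝ) ≤ Q) (hs : |(k : ℝ) - s| ≤ Q) (hj : (j : ℝ) ≤ k * u)
    (hQu : Q ≤ k * u) (hu : u ≤ 1 / 4) :
    |log ((2 * k + a)! * √π * s ^ ((c : ℝ) + d + 1 / 2 - a) * ((2 : ℝ) ^ (2 * k + a))⁻¹
        * exp (j ^ 2 / s) / ((k + j + c)! * (k - j + d)!))|
      ≤ 19 * Q * u + 65 * k * u ^ 3 := by
  have hk : (0 : ℝ) < k := by
    rcases (Nat.cast_nonneg k : (0 : ℝ) ≤ k).lt_or_eq with h | h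
    · exact h
    · rw [← h] at hQu; linarith
  have hu0 : 0 ≤ u := nonneg_of_mul_nonneg_right (by linarith) hk
  have hk0 : 0 < k := by exact_mod_cast hk
  have hjk : j < k := by exact_mod_cast (by nlinarith : (j : ℝ) < k)
  have hs0 : 0 < s := by nlinarith [(abs_le.mp hs).2]
  have hlog : log ((2 * k + a)! * √π * s ^ ((c : ℝ) + d + 1 / 2 - a) * ((2 : ℝ) ^ (2 * k + a))⁻¹
        * exp (j ^ 2 / s) / ((k + j + c)! * (k - j + d)!))
      = log (2 * k + a)! - ((2 * k + a : ℕ) : ℝ) * log 2 + log √π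
        + ((c : ℝ) + d + 1 / 2 - a) * log s + j ^ 2 / s - log (k + j + c)! - log (k - j + d)! := by
    rw [log_div (by positivity) (by positivity), log_mul (by positivity) (by positivity),
      log_mul (by positivity) (by positivity), log_mul (by positivity) (by positivity),
      log_mul (by positivity) (by positivity), log_mul (by positivity) (by positivity),
      log_rpow hs0, log_inv, log_pow, log_exp]
    ring
  have castN : ((2 * k + a : ℕ) : ℝ) = 2 * k + a := by push_cast; ring
  have castp : ((k + j + c : ℕ) : ℝ) = k + j + c := by push_cast; ring
  have castq : ((k - j + d : ℕ) : ℝ) = k - j + d := by push_cast [hjk.le]; ring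
  have stirN := abs_log_factorial_sub_logStirlingApprox_le (n := 2 * k + a) (by omega)
  have stirp := abs_log_factorial_sub_logStirlingApprox_le (n := k + j + c) (by omega)
  have stirq := abs_log_factorial_sub_logStirlingApprox_le (n := k - j + d) (by omega)
  rw [castN] at stirN
  rw [castp] at stirp
  rw [castq] at stirq
  have hmain := abs_logStirlingApprox_combination_le (a := a) (c := c) (d := d) (J := j) hk hQ
    (by rwa [Nat.abs_cast]) (by rwa [Nat.abs_cast]) (by rwa [Nat.abs_cast]) hs
    (by rwa [Nat.abs_cast]) hQu hu
  have herr : ∀ m : ℝ, k / 2 ≤ m → 1 / (12 * m) ≤ Q * u / 6 := by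
    intro m hm
    rw [div_le_div_iff₀ (by linarith) (by norm_num)]
    have hQu0 : 0 ≤ Q * u := by positivity
    nlinarith [mul_le_mul_of_nonneg_left hQu (by linarith : 0 ≤ Q),
      mul_le_mul_of_nonneg_left hm hQu0]
  have errN := herr _ (by linarith : (k : ℝ) / 2 ≤ 2 * k + a)
  have errp := herr _ (by linarith : (k : ℝ) / 2 ≤ k + j + c)
  have errq := herr _ (by nlinarith : (k : ℝ) / 2 ≤ k - j + d)
  rw [hlog, castN, abs_le]
  constructor <;> linarith [abs_le.mp stirN, abs_le.mp stirp, abs_le.mp stirq, abs_le.mp hmain]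

theorem abs_sub_one_le_two_mul_abs_log {x : ℝ} (hx : 0 < x) (h : |log x| ≤ 1) :
    |x - 1| ≤ 2 * |log x| := by
  simpa [exp_log hx] using abs_exp_sub_one_le h

theorem abs_log_factorial_ratio_le_const_div (a c d j k : ℕ) {Q t₀ t r : ℝ} (hQ : 1 ≤ Q)
    (ha : (a : ℝ) ≤ Q) (hc : (c : ℝ) ≤ Q) (hd : (d : ℝ) ≤ Q) (ht₀ : 0 < t₀) (ht₀1 : t₀ ≤ 1)
    (ht : t₀ ≤ t) (hr : 8 * Q / t₀ ≤ r) (hk : |(k : ℝ) - r ^ 2 * t| ≤ Q) (hj : (j : ℝ) ≤ Q * r) :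
    |log ((2 * k + a)! * √π * (r ^ 2 * t) ^ ((c : ℝ) + d + 1 / 2 - a) * ((2 : ℝ) ^ (2 * k + a))⁻¹
        * exp (j ^ 2 / (r ^ 2 * t)) / ((k + j + c)! * (k - j + d)!))|
      ≤ 300 * Q ^ 3 / t₀ ^ 2 / r := by
  have h8 : 8 * Q ≤ t₀ * r := by rw [div_le_iff₀ ht₀] at hr; linarith
  have hr8 : 8 ≤ r := le_trans (by rw [le_div_iff₀ ht₀]; nlinarith) hr
  have hrt : t₀ * r ^ 2 ≤ r ^ 2 * t := by nlinarith
  have hK : t₀ * r ^ 2 / 2 ≤ k := by nlinarith [abs_le.mp hk]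
  have hDk : 4 * (Q * r) ≤ k := by nlinarith [abs_le.mp hk]
  have hK0 : 0 < t₀ * r ^ 2 / 2 := by positivity
  have hk0 : (0 : ℝ) < k := hK0.trans_le hK
  have hu : (k : ℝ) * (Q * r / k) = Q * r := by field_simp
  refine (abs_log_factorial_ratio_le a c d j k (u := Q * r / k) hQ ha hc hd hk (by rwa [hu])
    (by rw [hu]; nlinarith) (by rw [div_le_iff₀ hk0]; linarith)).trans ?_
  calc 19 * Q * (Q * r / k) + 65 * k * (Q * r / k) ^ 3
      = 19 * (Q ^ 2 * r / k) + 65 * ((Q * r) ^ 3 / k ^ 2) := by field_simp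
    _ ≤ 19 * (Q ^ 2 * r / (t₀ * r ^ 2 / 2)) + 65 * ((Q * r) ^ 3 / (t₀ * r ^ 2 / 2) ^ 2) := by
        gcongr
    _ = (38 * Q ^ 2 * t₀ + 260 * Q ^ 3) / t₀ ^ 2 / r := by field_simp; ring
    _ ≤ 300 * Q ^ 3 / t₀ ^ 2 / r := by gcongr; nlinarith

/-- uniform Stirling-type estimate (Lemma 1 of the paper).
For nonnegative integers `a, c, d`, `0 < t₀ ≤ 1`, and bounds `B, M > 0`, there are
`C > 0` and `n₀` such that for all `n ≥ n₀`, all `t ∈ [t₀, 1]`, all `b ∈ [0, B]` with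
`b·√(2n) = j ∈ ℕ`, and all integers `k` with `|k − n·t| ≤ M` and `k ≥ b·√(2n)`,
`| (2k+a)! √π (nt)^{c+d+1/2−a} 2^{−(2k+a)} e^{2b²/t} / ((k+b√(2n)+c)! (k−b√(2n)+d)!) − 1 | ≤ C/√n`. -/
theorem stirling_star_estimate (a c d : ℕ) (t₀ : ℝ) (ht₀ : 0 < t₀) (ht₀' : t₀ ≤ 1)
    (B M : ℝ) (hB : 0 < B) (hM : 0 < M) :
    ∃ C > (0 : ℝ), ∃ n₀ : ℕ, ∀ n : ℕ, n₀ ≤ n →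
      ∀ t : ℝ, t₀ ≤ t → t ≤ 1 →
      ∀ b : ℝ, 0 ≤ b → b ≤ B →
      ∀ j : ℕ, (j : ℝ) = b * Real.sqrt (2 * n) →
      ∀ k : ℕ, |(k : ℝ) - n * t| ≤ M → j ≤ k →
      |(Nat.factorial (2 * k + a) : ℝ) * Real.sqrt Real.pi
          * ((n : ℝ) * t) ^ ((c : ℝ) + (d : ℝ) + 1 / 2 - (a : ℝ))
          * ((2 : ℝ) ^ (2 * k + a))⁻¹ * Real.exp (2 * b ^ 2 / t)
          / ((Nat.factorial (k + j + c) : ℝ) * (Nat.factorial (k - j + d) : ℝ))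
        - 1| ≤ C / Real.sqrt n := by
  obtain ⟨Q, hQ_def⟩ : ∃ Q : ℝ, Q = a + c + d + 2 * B + M + 1 := ⟨_, rfl⟩
  have ha0 : (0 : ℝ) ≤ a := a.cast_nonneg
  have hc0 : (0 : ℝ) ≤ c := c.cast_nonneg
  have hd0 : (0 : ℝ) ≤ d := d.cast_nonneg
  have hQ : 1 ≤ Q := by linarith
  obtain ⟨C, hC_def⟩ : ∃ C : ℝ, C = 300 * Q ^ 3 / t₀ ^ 2 := ⟨_, rfl⟩
  have hC : 0 < C := by rw [hC_def]; positivity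
  refine ⟨2 * C, by positivity, ⌈(8 * Q / t₀) ^ 2 + C ^ 2⌉₊,
    fun n hn t ht _ b _ hbB j hj k hk _ => ?_⟩
  have hn' : (8 * Q / t₀) ^ 2 + C ^ 2 ≤ n := (Nat.le_ceil _).trans (by exact_mod_cast hn)
  have hr : 8 * Q / t₀ ≤ √n := le_sqrt_of_sq_le (by nlinarith)
  have hrC : C ≤ √n := le_sqrt_of_sq_le (by nlinarith)
  have hn0 : (0 : ℝ) < n := by nlinarith [show 0 < 8 * Q / t₀ by positivity]
  have hjQ : (j : ℝ) ≤ Q * √n := by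
    have h2 : √(2 * n) ≤ 2 * √n := by
      rw [sqrt_mul zero_le_two]; gcongr; nlinarith [sq_sqrt zero_le_two, sqrt_nonneg 2]
    rw [hj]
    nlinarith [mul_le_mul hbB h2 (sqrt_nonneg _) hB.le, sqrt_nonneg n]
  have hexp : 2 * b ^ 2 / t = j ^ 2 / (√n ^ 2 * t) := by
    rw [hj, mul_pow, sq_sqrt (by positivity), sq_sqrt hn0.le]; field_simp
  have hlog := abs_log_factorial_ratio_le_const_div a c d j k hQ (by linarith) (by linarith)
    (by linarith) ht₀ ht₀' ht hr (by rw [sq_sqrt hn0.le]; linarith) hjQ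
  rw [← hexp, sq_sqrt hn0.le, ← hC_def] at hlog
  have ht0 : 0 < t := ht₀.trans_le ht
  refine (abs_sub_one_le_two_mul_abs_log (by positivity)
    (hlog.trans ((div_le_one (by positivity)).2 hrC))).trans ?_
  exact (mul_le_mul_of_nonneg_left hlog zero_le_two).trans_eq (mul_div_assoc _ _ _).symm
end

section
/- For all integers p ≥ 1, n ≥ 1, every integer m with 0 ≤ m ≤ 2n, and every e = (e_1,…,e_p) ∈ ℤ^p, the number of (p,2n)-watermelons without wall condition w = (w_1,…,w_p) satisfying w_i(m) = e_i for all i equals N̂(m,e) · N̂(2n−m,e). -/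
/-- A star of length `m` without wall condition, with `p` branches, encoded as a
function `Fin p → ℕ → ℤ` (values beyond time `m` are pinned to `0` so that the
collection of stars is a finite set). Branch `i` (0-indexed) starts at `2i`. -/
def IsStarNW (p m : ℕ) (w : Fin p → ℕ → ℤ) : Prop :=
  (∀ i : Fin p, w i 0 = 2 * ((i : ℕ) : ℤ)) ∧
  (∀ i : Fin p, ∀ k, k < m → (w i (k + 1) - w i k = 1 ∨ w i (k + 1) - w i k = -1)) ∧
  (∀ i j : Fin p, i < j → ∀ k, k ≤ m → w i k < w j k) ∧
  (∀ i : Fin p, ∀ k, m < k → w i k = 0)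

/-- A `(p,2n)`-watermelon without wall condition: a star of length `2n` without wall
condition whose branches return to their starting points at time `2n`. -/
def IsMelonNW (p n : ℕ) (w : Fin p → ℕ → ℤ) : Prop :=
  IsStarNW p (2 * n) w ∧ ∀ i : Fin p, w i (2 * n) = 2 * ((i : ℕ) : ℤ)

/-- `NHat p m e` is the number of stars of length `m` without wall condition ending at `e`. -/
noncomputable def NHat (p m : ℕ) (e : Fin p → ℤ) : ℕ :=
  Nat.card {w : Fin p → ℕ → ℤ // IsStarNW p m w ∧ ∀ i, w i m = e i}

/-!
A watermelon of length `L` through `e` at time `m` is cut at time `m`. The first piece is a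
star of length `m` ending at `e`; read backwards from time `L`, the second piece starts where
the watermelon ends, i.e. at the initial configuration, so it is a star of length `L - m`
ending at `e`. Conversely any two such stars glue, after reversing the second, to a watermelon
through `e`, and the two operations are inverse to each other.
-/

namespace StarNW

variable {p : ℕ}

def cutAt (m : ℕ) (w : Fin p → ℕ → ℤ) : Fin p → ℕ → ℤ :=
  fun i k => if k ≤ m then w i k else 0

def reverse (L : ℕ) (w : Fin p → ℕ → ℤ) : Fin p → ℕ → ℤ :=
  fun i k => w i (L - k)

def glue (m L : ℕ) (u v : Fin p → ℕ → ℤ) : Fin p → ℕ → ℤ :=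
  fun i k => if k ≤ m then u i k else if k ≤ L then v i (L - k) else 0

variable {m L : ℕ} {u v w : Fin p → ℕ → ℤ}

theorem cutAt_eq_self (hw : IsStarNW p m w) : cutAt m w = w := by
  funext i k
  by_cases hk : k ≤ m
  · simp [cutAt, hk]
  · simp [cutAt, hk, hw.2.2.2 i k (by omega)]

theorem isStarNW_cutAt (hw : IsStarNW p L w) (hm : m ≤ L) : IsStarNW p m (cutAt m w) := by
  obtain ⟨hstart, hstep, hord, -⟩ := hw
  refine ⟨fun i => by simp [cutAt, hstart i], fun i k hk => ?_,
    fun i j hij k hk => ?_, fun i k hk => by simp [cutAt, Nat.not_le.mpr hk]⟩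
  · simpa [cutAt, hk.le, Nat.succ_le_of_lt hk] using hstep i k (by omega)
  · simpa [cutAt, hk] using hord i j hij k (by omega)

theorem isStarNW_cutAt_reverse (hw : IsStarNW p L w) (hret : ∀ i, w i L = 2 * ((i : ℕ) : ℤ))
    (hm : m ≤ L) : IsStarNW p m (cutAt m (reverse L w)) := by
  obtain ⟨-, hstep, hord, -⟩ := hw
  refine ⟨fun i => by simp [cutAt, reverse, hret i], fun i k hk => ?_,
    fun i j hij k hk => ?_, fun i k hk => by simp [cutAt, Nat.not_le.mpr hk]⟩
  · have h := hstep i (L - (k + 1)) (by omega)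
    rw [show L - (k + 1) + 1 = L - k by omega] at h
    simp only [cutAt, reverse, if_pos hk.le, if_pos (Nat.succ_le_of_lt hk)]
    omega
  · simpa [cutAt, reverse, hk] using hord i j hij (L - k) (by omega)

theorem isStarNW_glue (hu : IsStarNW p m u) (hv : IsStarNW p (L - m) v)
    (huv : ∀ i, u i m = v i (L - m)) (hm : m ≤ L) : IsStarNW p L (glue m L u v) := by
  obtain ⟨hu0, hustep, huord, -⟩ := hu
  obtain ⟨-, hvstep, hvord, -⟩ := hv
  refine ⟨fun i => by simp [glue, hu0 i], fun i k hk => ?_, fun i j hij k hk => ?_,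
    fun i k hk => by simp [glue, Nat.not_le.mpr hk, show ¬k ≤ m by omega]⟩
  · rcases Nat.lt_or_ge k m with hkm | hkm
    · simpa [glue, hkm.le, Nat.succ_le_of_lt hkm] using hustep i k hkm
    · have hrev := hvstep i (L - (k + 1)) (by omega)
      rw [show L - (k + 1) + 1 = L - k by omega] at hrev
      simp only [glue, if_neg (show ¬k + 1 ≤ m by omega), if_pos (show k + 1 ≤ L by omega),
        if_pos (show k ≤ L by omega)]
      split_ifs with hkm'
      · obtain rfl : k = m := by omega
        rw [huv i]
        omega
      · omega
  · by_cases hkm : k ≤ m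
    · simpa [glue, hkm] using huord i j hij k hkm
    · simpa [glue, hkm, hk] using hvord i j hij (L - k) (by omega)

theorem glue_apply_final (hv : IsStarNW p (L - m) v) (huv : ∀ i, u i m = v i (L - m))
    (hm : m ≤ L) (i : Fin p) :
    glue m L u v i L = 2 * ((i : ℕ) : ℤ) := by
  by_cases hLm : L ≤ m
  · obtain rfl : L = m := le_antisymm hLm hm
    simpa [glue, huv i] using hv.1 i
  · simpa [glue, hLm] using hv.1 i

theorem cutAt_glue (hu : IsStarNW p m u) : cutAt m (glue m L u v) = u := by
  conv_rhs => rw [← cutAt_eq_self hu]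
  funext i k
  by_cases hk : k ≤ m <;> simp [cutAt, glue, hk]

theorem cutAt_reverse_glue (hv : IsStarNW p (L - m) v) (huv : ∀ i, u i m = v i (L - m))
    (hm : m ≤ L) : cutAt (L - m) (reverse L (glue m L u v)) = v := by
  conv_rhs => rw [← cutAt_eq_self hv]
  funext i k
  by_cases hk : k ≤ L - m
  · by_cases hkm : L - k ≤ m
    · obtain rfl : k = L - m := by omega
      simp [cutAt, reverse, glue, huv i, show L - (L - m) = m by omega]
    · simp [cutAt, reverse, glue, hk, hkm, show L - (L - k) = k by omega]
  · simp [cutAt, hk]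

theorem glue_cutAt_cutAt_reverse (hw : IsStarNW p L w) (hm : m ≤ L) :
    glue m L (cutAt m w) (cutAt (L - m) (reverse L w)) = w := by
  funext i k
  by_cases hkm : k ≤ m
  · simp [glue, cutAt, hkm]
  · by_cases hkL : k ≤ L
    · simp [glue, cutAt, reverse, hkm, hkL, show L - k ≤ L - m by omega,
        show L - (L - k) = k by omega]
    · simp [glue, hkm, hkL, hw.2.2.2 i k (by omega)]

def melonThroughEquiv (hm : m ≤ L) (e : Fin p → ℤ) :
    {w : Fin p → ℕ → ℤ //
        (IsStarNW p L w ∧ ∀ i, w i L = 2 * ((i : ℕ) : ℤ)) ∧ ∀ i, w i m = e i} ≃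
      {u : Fin p → ℕ → ℤ // IsStarNW p m u ∧ ∀ i, u i m = e i} ×
        {v : Fin p → ℕ → ℤ // IsStarNW p (L - m) v ∧ ∀ i, v i (L - m) = e i} where
  toFun w :=
    (⟨cutAt m w.1, isStarNW_cutAt w.2.1.1 hm, fun i => by simp [cutAt, w.2.2 i]⟩,
      ⟨cutAt (L - m) (reverse L w.1), isStarNW_cutAt_reverse w.2.1.1 w.2.1.2 (Nat.sub_le L m),
        fun i => by simp [cutAt, reverse, Nat.sub_sub_self hm, w.2.2 i]⟩)
  invFun uv :=
    have huv : ∀ i, uv.1.1 i m = uv.2.1 i (L - m) := fun i =>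
      (uv.1.2.2 i).trans (uv.2.2.2 i).symm
    ⟨glue m L uv.1.1 uv.2.1,
      ⟨isStarNW_glue uv.1.2.1 uv.2.2.1 huv hm, glue_apply_final uv.2.2.1 huv hm⟩,
      fun i => by simp [glue, uv.1.2.2 i]⟩
  left_inv w := Subtype.ext (glue_cutAt_cutAt_reverse w.2.1.1 hm)
  right_inv uv := Prod.ext (Subtype.ext (cutAt_glue uv.1.2.1))
    (Subtype.ext (cutAt_reverse_glue uv.2.2.1
      (fun i => (uv.1.2.2 i).trans (uv.2.2.2 i).symm) hm))

end StarNW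

theorem melonNW_count_through_general (p n m : ℕ) (hm : m ≤ 2 * n)
    (e : Fin p → ℤ) :
    Nat.card {w : Fin p → ℕ → ℤ // IsMelonNW p n w ∧ ∀ i, w i m = e i}
      = NHat p m e * NHat p (2 * n - m) e := by
  rw [NHat, NHat, ← Nat.card_prod]
  exact Nat.card_congr (StarNW.melonThroughEquiv hm e)

/-- the number of `(p,2n)`-watermelons without wall condition passing
through `e` at time `m` equals `N̂(m,e) · N̂(2n−m,e)`. -/
theorem melonNW_count_through (p n m : ℕ) (hp : 1 ≤ p) (hn : 1 ≤ n) (hm : m ≤ 2 * n)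
    (e : Fin p → ℤ) :
    Nat.card {w : Fin p → ℕ → ℤ // IsMelonNW p n w ∧ ∀ i, w i m = e i}
      = NHat p m e * NHat p (2 * n - m) e :=
  melonNW_count_through_general p n m hm e
end

section
/- Let p ≥ 1 be an integer and let x_1,…,x_p be real numbers whose squares are pairwise distinct. Then ∑_{k=1}^p ∑_{(i,j): i≠j, i≠k, j≠k} x_k² / ( (x_k² − x_j²)(x_k² − x_i²) ) = 0, where the inner sum ranges over all ordered pairs (i,j) of indices in {1,…,p} with i, j, k pairwise distinct. -/
/-!
With `a_k = x_k²`, the term `a_k / ((a_k - a_j) (a_k - a_i))` summed over the three cyclic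
rotations of a triple of distinct indices is the second divided difference of `t ↦ t` at
`a_k, a_i, a_j`, hence zero. Rotating the summation variables permutes the ordered triples of
distinct indices, so three times the sum is the sum of these cyclic sums, which is zero.
-/

open Finset

section DistinctTriples

variable {ι M : Type*} [Fintype ι]

lemma sum_sum_sum_rotate [AddCommMonoid M] (f : ι → ι → ι → M) :
    ∑ k, ∑ i, ∑ j, f i j k = ∑ k, ∑ i, ∑ j, f k i j := by
  rw [Finset.sum_comm]
  exact Finset.sum_congr rfl fun _ _ => Finset.sum_comm

variable [DecidableEq ι] [AddCommGroup M]

lemma sum_erase_erase_eq_sum_ite (g : ι → ι → ι → M) :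
    ∑ k, ∑ i ∈ univ.erase k, ∑ j ∈ (univ.erase k).erase i, g k i j =
      ∑ k, ∑ i, ∑ j, if k ≠ i ∧ k ≠ j ∧ i ≠ j then g k i j else 0 := by
  refine Finset.sum_congr rfl fun k _ => ?_
  rw [← filter_ne', sum_filter]
  refine Finset.sum_congr rfl fun i _ => ?_
  split_ifs with hik
  · rw [← sum_filter]
    congr 1
    ext j
    simp only [mem_erase, mem_filter, mem_univ]
    tauto
  · simp [not_not.1 hik]

lemma sum_erase_erase_eq_zero_of_cyclic [IsAddTorsionFree M] (g : ι → ι → ι → M)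
    (hg : ∀ k i j, k ≠ i → k ≠ j → i ≠ j → g k i j + g i j k + g j k i = 0) :
    ∑ k, ∑ i ∈ univ.erase k, ∑ j ∈ (univ.erase k).erase i, g k i j = 0 := by
  set h : ι → ι → ι → M := fun k i j => if k ≠ i ∧ k ≠ j ∧ i ≠ j then g k i j else 0
  have h_cyclic : ∀ k i j, h k i j + h i j k + h j k i = 0 := by
    intro k i j
    have rot₁ : (i ≠ j ∧ i ≠ k ∧ j ≠ k) ↔ (k ≠ i ∧ k ≠ j ∧ i ≠ j) := by
      simp only [ne_comm (a := i) (b := k), ne_comm (a := j) (b := k)]; tauto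
    have rot₂ : (j ≠ k ∧ j ≠ i ∧ k ≠ i) ↔ (k ≠ i ∧ k ≠ j ∧ i ≠ j) := by
      simp only [ne_comm (a := j)]; tauto
    simp only [h, rot₁, rot₂]
    split_ifs with hd
    · exact hg k i j hd.1 hd.2.1 hd.2.2
    · simp
  rw [sum_erase_erase_eq_sum_ite, ← nsmul_eq_zero_iff_right three_ne_zero]
  calc 3 • ∑ k, ∑ i, ∑ j, h k i j
      = ∑ k, ∑ i, ∑ j, (h k i j + h i j k + h j k i) := by
        simp only [sum_add_distrib]
        rw [sum_sum_sum_rotate (fun a b c => h b c a), sum_sum_sum_rotate h]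
        abel
    _ = 0 := by simp [h_cyclic]

end DistinctTriples

lemma div_mul_sub_cyclic_add_eq_zero {K : Type*} [Field K] {a b c : K}
    (hab : a ≠ b) (hac : a ≠ c) (hbc : b ≠ c) :
    a / ((a - c) * (a - b)) + b / ((b - a) * (b - c)) + c / ((c - b) * (c - a)) = 0 := by
  have := sub_ne_zero.2 hab
  have := sub_ne_zero.2 hac
  have := sub_ne_zero.2 hbc
  rw [← neg_sub a b, ← neg_sub a c, ← neg_sub b c]
  field_simp
  ring

theorem sum_triple_ratio_sq_eq_zero_general (p : ℕ) (x : Fin p → ℝ)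
    (hx : ∀ i j : Fin p, i ≠ j → (x i) ^ 2 ≠ (x j) ^ 2) :
    ∑ k : Fin p, ∑ i ∈ Finset.univ.erase k, ∑ j ∈ (Finset.univ.erase k).erase i,
        (x k) ^ 2 / (((x k) ^ 2 - (x j) ^ 2) * ((x k) ^ 2 - (x i) ^ 2))
      = 0 :=
  sum_erase_erase_eq_zero_of_cyclic _ fun k i j hki hkj hij =>
    div_mul_sub_cyclic_add_eq_zero (hx k i hki) (hx k j hkj) (hx i j hij)

/-- if `x_1², …, x_p²` are pairwise distinct, then
`∑_{k} ∑_{(i,j) : i,j,k pairwise distinct} x_k² / ((x_k² − x_j²)(x_k² − x_i²)) = 0`. -/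
theorem sum_triple_ratio_sq_eq_zero (p : ℕ) (hp : 1 ≤ p) (x : Fin p → ℝ)
    (hx : ∀ i j : Fin p, i ≠ j → (x i) ^ 2 ≠ (x j) ^ 2) :
    ∑ k : Fin p, ∑ i ∈ Finset.univ.erase k, ∑ j ∈ (Finset.univ.erase k).erase i,
        (x k) ^ 2 / (((x k) ^ 2 - (x j) ^ 2) * ((x k) ^ 2 - (x i) ^ 2))
      = 0 :=
  sum_triple_ratio_sq_eq_zero_general p x hx
end

section
/- For every integer k ≥ 1: (i) ∫∫_{0 ≤ u_1 ≤ u_2 < ∞} u_1^{2k} · (u_2² − u_1²)² · u_1² u_2² · exp(−(u_1² + u_2²)/2) du_1 du_2 = 2(3 − k)(k+1)! + ( (k² + k + 3)(2k+2)! / ( (k+1)! · 2^{k+1} ) ) · ( π − 2 ∑_{j=1}^{k+1} 2^j / ( j · C(2j, j) ) ), and (ii) ∫∫_{0 ≤ u_1 ≤ u_2 < ∞} u_2^{2k} · (u_2² − u_1²)² · u_1² u_2² · exp(−(u_1² + u_2²)/2) du_1 du_2 = −2(3 − k)(k+1)! + ( (k² + k + 3)(2k+2)! / ( (k+1)! ·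 2^{k+1} ) ) · ( π + 2 ∑_{j=1}^{k+1} 2^j / ( j · C(2j, j) ) ). (Equivalently, these give the even moments E[X_1(t)^{2k}] and E[X_2(t)^{2k}] of the two branches of the continuous 2-watermelon with wall condition at time t after multiplying by (t(1−t))^k/(3π), where (X_1(t),X_2(t)) has density f(t;·).) -/
/-!
Write `φₙ(x) = xⁿ e^{-x²/2}`, `Gₙ(u) = ∫_u^∞ φₙ` and `W(m, n) = ∫_0^∞ φₘ Gₙ`, the integral of
`x^m y^n e^{-(x²+y²)/2}` over the wedge `0 ≤ x ≤ y`. Expanding `(y² - x²)² x² y²` turns each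
branch moment into a combination of three values of `W`. Integrating by parts in either variable
gives `W(m, n + 2) = (n + 1) W(m, n) + I` and `W(m + 2, n) = (m + 1) W(m, n) - I`, where
`I = ∫_0^∞ x^{m+n+1} e^{-x²} = ((m + n) / 2)! / 2` for even `m + n`, and the two wedges tile the
quadrant: `W(m, n) + W(n, m) = Gₘ(0) Gₙ(0)`. Starting from `W(0, 0) = π / 4` this gives
`W(2a, 0) = (2a - 1)!! / 2 · (π / 2 - ∑_{j ≤ a} 2^j / (j C(2j, j)))`, hence the first moment;
by the symmetry relation the two moments add up to `2π (k² + k + 3) (2k + 1)!!`, hence the second.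
-/

open MeasureTheory Set Filter Real Topology Nat

noncomputable section

theorem integrable_pow_mul_exp_neg_mul_sq {b : ℝ} (hb : 0 < b) (n : ℕ) :
    Integrable fun x : ℝ => x ^ n * exp (-b * x ^ 2) := by
  simpa only [rpow_natCast] using
    integrable_rpow_mul_exp_neg_mul_sq hb (s := n) (by linarith [n.cast_nonneg (α := ℝ)])

theorem integrable_pow_mul_exp_neg_sq (p : ℕ) : Integrable fun x : ℝ => x ^ p * exp (-x ^ 2) := by
  simpa using integrable_pow_mul_exp_neg_mul_sq one_pos p

theorem tendsto_pow_mul_exp_neg_mul_sq_atTop {b : ℝ} (hb : 0 < b) (n : ℕ) :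
    Tendsto (fun x : ℝ => x ^ n * exp (-b * x ^ 2)) atTop (𝓝 0) := by
  simpa only [rpow_natCast] using
    (rpow_mul_exp_neg_mul_sq_isLittleO_exp_neg hb n).tendsto_zero_of_tendsto
      (tendsto_exp_atBot.comp <| tendsto_id.const_mul_atTop_of_neg (by norm_num))

theorem integral_Ioi_pow_two_mul_add_one_mul_exp_neg_sq (q : ℕ) :
    ∫ x in Ioi (0 : ℝ), x ^ (2 * q + 1) * exp (-x ^ 2) = q ! / 2 := by
  have h := integral_rpow_mul_exp_neg_rpow two_pos (q := (2 * q + 1 : ℕ))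
    (neg_one_lt_zero.trans_le (Nat.cast_nonneg _))
  simp only [rpow_natCast, rpow_two] at h
  rw [h, show (((2 * q + 1 : ℕ) : ℝ) + 1) / 2 = q + 1 by push_cast; ring, Gamma_nat_eq_factorial]
  ring

def gaussPow (n : ℕ) (x : ℝ) : ℝ := x ^ n * exp (-(1 / 2) * x ^ 2)

def gaussTail (n : ℕ) (u : ℝ) : ℝ := ∫ x in Ioi u, gaussPow n x

theorem integrable_gaussPow (n : ℕ) : Integrable (gaussPow n) :=
  integrable_pow_mul_exp_neg_mul_sq (by norm_num) n

theorem continuous_gaussPow (n : ℕ) : Continuous (gaussPow n) := by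
  unfold gaussPow; fun_prop

theorem tendsto_gaussPow_atTop (n : ℕ) : Tendsto (gaussPow n) atTop (𝓝 0) :=
  tendsto_pow_mul_exp_neg_mul_sq_atTop (by norm_num) n

theorem gaussPow_mul_gaussPow (m n : ℕ) (x : ℝ) :
    gaussPow m x * gaussPow n x = x ^ (m + n) * exp (-x ^ 2) := by
  rw [gaussPow, gaussPow, mul_mul_mul_comm, ← exp_add, ← pow_add]
  ring_nf

theorem hasDerivAt_gaussPow_succ (n : ℕ) (x : ℝ) :
    HasDerivAt (gaussPow (n + 1)) ((n + 1) * gaussPow n x - gaussPow (n + 2) x) x := by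
  have hexp :
      HasDerivAt (fun y : ℝ => exp (-(1 / 2) * y ^ 2)) (-x * exp (-(1 / 2) * x ^ 2)) x := by
    simpa [mul_comm] using ((hasDerivAt_pow 2 x).const_mul (-(1 / 2) : ℝ)).exp
  refine ((hasDerivAt_pow (n + 1) x).fun_mul hexp).congr_deriv ?_
  simp only [gaussPow]
  push_cast
  ring

theorem gaussTail_eq_sub_intervalIntegral (n : ℕ) (u : ℝ) :
    gaussTail n u = gaussTail n 0 - ∫ x in (0 : ℝ)..u, gaussPow n x := by
  rw [← intervalIntegral.integral_Ioi_sub_Ioi' (integrable_gaussPow n).integrableOn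
    (integrable_gaussPow n).integrableOn, gaussTail, gaussTail, sub_sub_cancel]

theorem hasDerivAt_gaussTail (n : ℕ) (u : ℝ) : HasDerivAt (gaussTail n) (-gaussPow n u) u := by
  have h := intervalIntegral.integral_hasDerivAt_right (a := 0) (b := u)
    (integrable_gaussPow n).intervalIntegrable
    ((continuous_gaussPow n).stronglyMeasurableAtFilter _ _) (continuous_gaussPow n).continuousAt
  rw [funext (gaussTail_eq_sub_intervalIntegral n)]
  simpa using h.const_sub (gaussTail n 0)

theorem continuous_gaussTail (n : ℕ) : Continuous (gaussTail n) :=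
  continuous_iff_continuousAt.2 fun u => (hasDerivAt_gaussTail n u).continuousAt

theorem tendsto_gaussTail_atTop (n : ℕ) : Tendsto (gaussTail n) atTop (𝓝 0) := by
  have h := intervalIntegral_tendsto_integral_Ioi 0 (integrable_gaussPow n).integrableOn tendsto_id
  have h' := (tendsto_const_nhds (x := gaussTail n 0)).sub h
  rw [show ∫ x in Ioi (0 : ℝ), gaussPow n x = gaussTail n 0 from rfl, sub_self] at h'
  exact h'.congr fun v => (gaussTail_eq_sub_intervalIntegral n v).symm

theorem norm_gaussTail_le (n : ℕ) (u : ℝ) : ‖gaussTail n u‖ ≤ ∫ x, ‖gaussPow n x‖ :=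
  (norm_integral_le_integral_norm _).trans <|
    setIntegral_le_integral (integrable_gaussPow n).norm (.of_forall fun _ => norm_nonneg _)

theorem gaussTail_add_two (n : ℕ) (u : ℝ) :
    gaussTail (n + 2) u = (n + 1) * gaussTail n u + gaussPow (n + 1) u := by
  have h := integral_Ioi_of_hasDerivAt_of_tendsto' (a := u)
    (fun x _ => hasDerivAt_gaussPow_succ n x)
    (((integrable_gaussPow n).const_mul _).sub (integrable_gaussPow (n + 2))).integrableOn
    (tendsto_gaussPow_atTop (n + 1))
  rw [integral_sub ((integrable_gaussPow n).const_mul _).integrableOn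
    (integrable_gaussPow (n + 2)).integrableOn, integral_const_mul] at h
  rw [gaussTail, gaussTail]
  linarith

theorem gaussTail_zero_zero : gaussTail 0 0 = √(π / 2) := by
  have h := integral_gaussian_Ioi (1 / 2)
  simp only [gaussTail, gaussPow, pow_zero, one_mul, h]
  rw [show π / (1 / 2) = 2 ^ 2 * (π / 2) by ring, sqrt_mul (by positivity), sqrt_sq two_pos.le]
  ring

def wedgeMoment (m n : ℕ) : ℝ := ∫ x in Ioi 0, gaussPow m x * gaussTail n x

theorem integrable_gaussPow_mul_gaussTail (m n : ℕ) :
    Integrable fun x => gaussPow m x * gaussTail n x :=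
  (integrable_gaussPow m).mul_bdd (continuous_gaussTail n).aestronglyMeasurable
    (.of_forall (norm_gaussTail_le n))

theorem wedgeMoment_add_two_right (m n : ℕ) :
    wedgeMoment m (n + 2)
      = (n + 1) * wedgeMoment m n + ∫ x in Ioi 0, x ^ (m + n + 1) * exp (-x ^ 2) := by
  have hsplit : ∀ x, gaussPow m x * gaussTail (n + 2) x
      = (n + 1) * (gaussPow m x * gaussTail n x) + x ^ (m + n + 1) * exp (-x ^ 2) := fun x => by
    rw [gaussTail_add_two, mul_add, gaussPow_mul_gaussPow]
    ring_nf
  simp only [wedgeMoment, hsplit]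
  rw [integral_add ((integrable_gaussPow_mul_gaussTail m n).const_mul _).integrableOn
    (integrable_pow_mul_exp_neg_sq _).integrableOn, integral_const_mul]

theorem wedgeMoment_add_two_left (m n : ℕ) :
    wedgeMoment (m + 2) n
      = (m + 1) * wedgeMoment m n - ∫ x in Ioi 0, x ^ (m + n + 1) * exp (-x ^ 2) := by
  have hφ := integrable_gaussPow_mul_gaussTail
  have h := integral_Ioi_of_hasDerivAt_of_tendsto' (a := 0)
    (f' := fun x => (m + 1) * (gaussPow m x * gaussTail n x) - gaussPow (m + 2) x * gaussTail n x
      - x ^ (m + n + 1) * exp (-x ^ 2))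
    (fun x _ => ((hasDerivAt_gaussPow_succ m x).fun_mul (hasDerivAt_gaussTail n x)).congr_deriv <|
      by
        rw [← add_right_comm, ← gaussPow_mul_gaussPow]
        ring)
    ((((hφ m n).const_mul _).sub (hφ (m + 2) n)).sub
      (integrable_pow_mul_exp_neg_sq _)).integrableOn
    (by simpa using (tendsto_gaussPow_atTop (m + 1)).mul (tendsto_gaussTail_atTop n))
  rw [integral_sub (((hφ m n).const_mul _).sub' (hφ (m + 2) n)).integrableOn
      (integrable_pow_mul_exp_neg_sq _).integrableOn,
    integral_sub ((hφ m n).const_mul _).integrableOn (hφ (m + 2) n).integrableOn,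
    integral_const_mul] at h
  rw [show gaussPow (m + 1) 0 = 0 by simp [gaussPow], zero_mul, sub_zero] at h
  rw [wedgeMoment, wedgeMoment]
  linarith

theorem wedgeMoment_add_wedgeMoment_swap (m n : ℕ) :
    wedgeMoment m n + wedgeMoment n m = gaussTail m 0 * gaussTail n 0 := by
  -- `-(Gₘ Gₙ)' = φₘ Gₙ + φₙ Gₘ`, and `Gₘ Gₙ` vanishes at infinity.
  have h := integral_Ioi_of_hasDerivAt_of_tendsto' (a := 0)
    (f' := fun x => -(gaussPow m x * gaussTail n x + gaussPow n x * gaussTail m x))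
    (fun x _ =>
      ((hasDerivAt_gaussTail m x).fun_mul (hasDerivAt_gaussTail n x)).congr_deriv (by ring))
    ((integrable_gaussPow_mul_gaussTail m n).add
      (integrable_gaussPow_mul_gaussTail n m)).neg.integrableOn
    (by simpa using (tendsto_gaussTail_atTop m).mul (tendsto_gaussTail_atTop n))
  rw [integral_neg, integral_add (integrable_gaussPow_mul_gaussTail m n).integrableOn
    (integrable_gaussPow_mul_gaussTail n m).integrableOn] at h
  rw [wedgeMoment, wedgeMoment]
  linarith

theorem pow_mul_pow_mul_exp_eq_gaussPow_mul_gaussPow (m n : ℕ) (q : ℝ × ℝ) :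
    q.1 ^ m * q.2 ^ n * exp (-(q.1 ^ 2 + q.2 ^ 2) / 2) = gaussPow m q.1 * gaussPow n q.2 := by
  rw [gaussPow, gaussPow, mul_mul_mul_comm, ← exp_add]
  ring_nf

theorem integrable_gaussPow_mul_gaussPow (m n : ℕ) :
    Integrable fun q : ℝ × ℝ => gaussPow m q.1 * gaussPow n q.2 := by
  rw [Measure.volume_eq_prod]
  exact (integrable_gaussPow m).mul_prod (integrable_gaussPow n)

theorem integrable_pow_mul_pow_mul_exp (m n : ℕ) :
    Integrable fun q : ℝ × ℝ => q.1 ^ m * q.2 ^ n * exp (-(q.1 ^ 2 + q.2 ^ 2) / 2) := by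
  simpa only [pow_mul_pow_mul_exp_eq_gaussPow_mul_gaussPow] using
    integrable_gaussPow_mul_gaussPow m n

theorem setIntegral_wedge_eq_wedgeMoment (m n : ℕ) :
    ∫ q in {q : ℝ × ℝ | 0 ≤ q.1 ∧ q.1 ≤ q.2}, q.1 ^ m * q.2 ^ n * exp (-(q.1 ^ 2 + q.2 ^ 2) / 2)
      = wedgeMoment m n := by
  have hwedge : {q : ℝ × ℝ | 0 ≤ q.1 ∧ q.1 ≤ q.2} = (Ici 0 ×ˢ univ) ∩ {q | q.1 ≤ q.2} := by
    ext; simp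
  have hslice (x : ℝ) : ∫ y, {q : ℝ × ℝ | q.1 ≤ q.2}.indicator
      (fun q => gaussPow m q.1 * gaussPow n q.2) (x, y) = gaussPow m x * gaussTail n x := by
    rw [gaussTail, ← integral_Ici_eq_integral_Ioi, ← integral_const_mul,
      ← integral_indicator measurableSet_Ici]
    rfl
  have hle : MeasurableSet {q : ℝ × ℝ | q.1 ≤ q.2} :=
    measurableSet_le measurable_fst measurable_snd
  simp only [pow_mul_pow_mul_exp_eq_gaussPow_mul_gaussPow]
  rw [hwedge, ← setIntegral_indicator hle, Measure.volume_eq_prod, setIntegral_prod]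
  · simp only [Measure.restrict_univ, hslice, integral_Ici_eq_integral_Ioi, wedgeMoment]
  · rw [← Measure.volume_eq_prod]
    exact ((integrable_gaussPow_mul_gaussPow m n).indicator hle).integrableOn

/-- `(2a - 1)!!`, written so that `a = 0` involves no truncated subtraction. -/
def oddDoubleFactorial (a : ℕ) : ℝ := (2 * a)! / (a ! * 2 ^ a)

/-- Partial sums of Lehmer's series `∑_{j ≥ 1} 2^j / (j C(2j, j)) = π / 2`. -/
def lehmerPartialSum (a : ℕ) : ℝ :=
  ∑ j ∈ Finset.Icc 1 a, (2 : ℝ) ^ j / ((j : ℝ) * ((2 * j).choose j : ℝ))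

theorem oddDoubleFactorial_pos (a : ℕ) : 0 < oddDoubleFactorial a := by
  unfold oddDoubleFactorial; positivity

theorem oddDoubleFactorial_zero : oddDoubleFactorial 0 = 1 := by
  simp [oddDoubleFactorial]

theorem oddDoubleFactorial_succ (a : ℕ) :
    oddDoubleFactorial (a + 1) = (2 * a + 1) * oddDoubleFactorial a := by
  simp only [oddDoubleFactorial, show 2 * (a + 1) = 2 * a + 1 + 1 by ring, factorial_succ]
  push_cast
  field_simp
  ring

theorem lehmerPartialSum_succ (a : ℕ) :
    lehmerPartialSum (a + 1) = lehmerPartialSum a + a ! / oddDoubleFactorial (a + 1) := by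
  rw [lehmerPartialSum, Finset.sum_Icc_succ_top (by omega), ← lehmerPartialSum,
    cast_choose ℝ (by omega : a + 1 ≤ 2 * (a + 1)), show 2 * (a + 1) - (a + 1) = a + 1 by omega,
    oddDoubleFactorial, factorial_succ a]
  push_cast
  field_simp

theorem gaussTail_two_mul_zero (a : ℕ) :
    gaussTail (2 * a) 0 = oddDoubleFactorial a * √(π / 2) := by
  induction a with
  | zero => rw [mul_zero, gaussTail_zero_zero, oddDoubleFactorial_zero, one_mul]
  | succ a ih =>
    rw [show 2 * (a + 1) = 2 * a + 2 by ring, gaussTail_add_two, ih, oddDoubleFactorial_succ,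
      show gaussPow (2 * a + 1) 0 = 0 by simp [gaussPow], add_zero]
    push_cast
    ring

-- Even indices are kept in the form `2 * (b + 1)`, so that these recursions fire under `simp`
-- on numerals such as `2 * 3` as well as on `2 * (k + 3)`.
theorem wedgeMoment_two_mul_add_two_right (a b : ℕ) :
    wedgeMoment (2 * a) (2 * (b + 1))
      = (2 * b + 1) * wedgeMoment (2 * a) (2 * b) + (a + b)! / 2 := by
  rw [show 2 * (b + 1) = 2 * b + 2 by ring, wedgeMoment_add_two_right,
    show 2 * a + 2 * b + 1 = 2 * (a + b) + 1 by ring,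
    integral_Ioi_pow_two_mul_add_one_mul_exp_neg_sq]
  push_cast
  ring

theorem wedgeMoment_two_mul_add_two_left (a b : ℕ) :
    wedgeMoment (2 * (a + 1)) (2 * b)
      = (2 * a + 1) * wedgeMoment (2 * a) (2 * b) - (a + b)! / 2 := by
  rw [show 2 * (a + 1) = 2 * a + 2 by ring, wedgeMoment_add_two_left,
    show 2 * a + 2 * b + 1 = 2 * (a + b) + 1 by ring,
    integral_Ioi_pow_two_mul_add_one_mul_exp_neg_sq]
  push_cast
  ring

theorem wedgeMoment_two_mul_zero (a : ℕ) :
    wedgeMoment (2 * a) 0 = oddDoubleFactorial a / 2 * (π / 2 - lehmerPartialSum a) := by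
  induction a with
  | zero =>
    have h := wedgeMoment_add_wedgeMoment_swap 0 0
    rw [gaussTail_zero_zero, mul_self_sqrt (by positivity)] at h
    rw [mul_zero, oddDoubleFactorial_zero, lehmerPartialSum,
      Finset.Icc_eq_empty_of_lt zero_lt_one, Finset.sum_empty]
    linarith
  | succ a ih =>
    have h := wedgeMoment_two_mul_add_two_left a 0
    rw [mul_zero] at h
    rw [h, ih, lehmerPartialSum_succ, oddDoubleFactorial_succ, add_zero]
    have := (oddDoubleFactorial_pos a).ne'
    field_simp
    ring

theorem wedgeMoment_fst_branch (k : ℕ) :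
    wedgeMoment (2 * (k + 1)) (2 * 3) - 2 * wedgeMoment (2 * (k + 2)) (2 * 2)
        + wedgeMoment (2 * (k + 3)) (2 * 1)
      = 2 * (3 - k) * (k + 1)! + (k ^ 2 + k + 3) * oddDoubleFactorial (k + 1)
          * (π - 2 * lehmerPartialSum (k + 1)) := by
  simp only [wedgeMoment_two_mul_add_two_right, mul_zero, wedgeMoment_two_mul_zero,
    lehmerPartialSum_succ, oddDoubleFactorial_succ, factorial_succ]
  have := (oddDoubleFactorial_pos k).ne'
  push_cast
  field_simp
  ring

theorem wedgeMoment_snd_branch_add_fst_branch (k : ℕ) :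
    (wedgeMoment (2 * 1) (2 * (k + 3)) - 2 * wedgeMoment (2 * 2) (2 * (k + 2))
        + wedgeMoment (2 * 3) (2 * (k + 1)))
      + (wedgeMoment (2 * (k + 1)) (2 * 3) - 2 * wedgeMoment (2 * (k + 2)) (2 * 2)
        + wedgeMoment (2 * (k + 3)) (2 * 1))
      = 2 * π * (k ^ 2 + k + 3) * oddDoubleFactorial (k + 1) := by
  have h (i j : ℕ) : wedgeMoment (2 * i) (2 * j) + wedgeMoment (2 * j) (2 * i)
      = oddDoubleFactorial i * oddDoubleFactorial j * (π / 2) := by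
    rw [wedgeMoment_add_wedgeMoment_swap, gaussTail_two_mul_zero, gaussTail_two_mul_zero,
      mul_mul_mul_comm, mul_self_sqrt (by positivity)]
  have h₁ := h 1 (k + 3)
  have h₂ := h 2 (k + 2)
  have h₃ := h 3 (k + 1)
  simp only [oddDoubleFactorial_succ, oddDoubleFactorial_zero] at h₁ h₂ h₃ ⊢
  push_cast at h₁ h₂ h₃
  linear_combination h₁ - 2 * h₂ + h₃

theorem setIntegral_wedge_pow_mul_pow_mul_sq_sub_sq (i j : ℕ) :
    ∫ q in {q : ℝ × ℝ | 0 ≤ q.1 ∧ q.1 ≤ q.2}, q.1 ^ i * q.2 ^ j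
        * ((q.2 ^ 2 - q.1 ^ 2) ^ 2 * q.1 ^ 2 * q.2 ^ 2) * exp (-(q.1 ^ 2 + q.2 ^ 2) / 2)
      = wedgeMoment (i + 2) (j + 6) - 2 * wedgeMoment (i + 4) (j + 4)
          + wedgeMoment (i + 6) (j + 2) := by
  set f : ℕ → ℕ → ℝ × ℝ → ℝ := fun m n q => q.1 ^ m * q.2 ^ n * exp (-(q.1 ^ 2 + q.2 ^ 2) / 2)
  have hf (m n : ℕ) : IntegrableOn (f m n) {q : ℝ × ℝ | 0 ≤ q.1 ∧ q.1 ≤ q.2} :=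
    (integrable_pow_mul_pow_mul_exp m n).integrableOn
  rw [integral_congr_ae (g := fun q => f (i + 2) (j + 6) q - 2 * f (i + 4) (j + 4) q
      + f (i + 6) (j + 2) q) (.of_forall fun q => by simp only [f]; ring),
    integral_add ((hf _ _).sub' ((hf _ _).const_mul 2)) (hf _ _),
    integral_sub (hf _ _) ((hf _ _).const_mul 2), integral_const_mul]
  simp only [f, setIntegral_wedge_eq_wedgeMoment]

theorem setIntegral_wedge_fst_branch (k : ℕ) :
    ∫ q in {q : ℝ × ℝ | 0 ≤ q.1 ∧ q.1 ≤ q.2}, q.1 ^ (2 * k) * (q.2 ^ 2 - q.1 ^ 2) ^ 2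
        * q.1 ^ 2 * q.2 ^ 2 * exp (-(q.1 ^ 2 + q.2 ^ 2) / 2)
      = wedgeMoment (2 * (k + 1)) (2 * 3) - 2 * wedgeMoment (2 * (k + 2)) (2 * 2)
          + wedgeMoment (2 * (k + 3)) (2 * 1) :=
  (integral_congr_ae (.of_forall fun q => by ring)).trans
    (setIntegral_wedge_pow_mul_pow_mul_sq_sub_sq (2 * k) 0)

theorem setIntegral_wedge_snd_branch (k : ℕ) :
    ∫ q in {q : ℝ × ℝ | 0 ≤ q.1 ∧ q.1 ≤ q.2}, q.2 ^ (2 * k) * (q.2 ^ 2 - q.1 ^ 2) ^ 2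
        * q.1 ^ 2 * q.2 ^ 2 * exp (-(q.1 ^ 2 + q.2 ^ 2) / 2)
      = wedgeMoment (2 * 1) (2 * (k + 3)) - 2 * wedgeMoment (2 * 2) (2 * (k + 2))
          + wedgeMoment (2 * 3) (2 * (k + 1)) :=
  (integral_congr_ae (.of_forall fun q => by ring)).trans
    (setIntegral_wedge_pow_mul_pow_mul_sq_sub_sq 0 (2 * k))

end

theorem melonW2_even_moment_integrals_general (k : ℕ) :
    ((∫ q in {q : ℝ × ℝ | 0 ≤ q.1 ∧ q.1 ≤ q.2},
        q.1 ^ (2 * k) * (q.2 ^ 2 - q.1 ^ 2) ^ 2 * q.1 ^ 2 * q.2 ^ 2 *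
          Real.exp (-(q.1 ^ 2 + q.2 ^ 2) / 2))
      = 2 * (3 - (k : ℝ)) * (Nat.factorial (k + 1) : ℝ)
        + ((k : ℝ) ^ 2 + (k : ℝ) + 3) * (Nat.factorial (2 * k + 2) : ℝ)
            / ((Nat.factorial (k + 1) : ℝ) * 2 ^ (k + 1))
          * (Real.pi - 2 * ∑ j ∈ Finset.Icc 1 (k + 1),
              (2 : ℝ) ^ j / ((j : ℝ) * (Nat.choose (2 * j) j : ℝ))))
    ∧ ((∫ q in {q : ℝ × ℝ | 0 ≤ q.1 ∧ q.1 ≤ q.2},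
        q.2 ^ (2 * k) * (q.2 ^ 2 - q.1 ^ 2) ^ 2 * q.1 ^ 2 * q.2 ^ 2 *
          Real.exp (-(q.1 ^ 2 + q.2 ^ 2) / 2))
      = -(2 * (3 - (k : ℝ)) * (Nat.factorial (k + 1) : ℝ))
        + ((k : ℝ) ^ 2 + (k : ℝ) + 3) * (Nat.factorial (2 * k + 2) : ℝ)
            / ((Nat.factorial (k + 1) : ℝ) * 2 ^ (k + 1))
          * (Real.pi + 2 * ∑ j ∈ Finset.Icc 1 (k + 1),
              (2 : ℝ) ^ j / ((j : ℝ) * (Nat.choose (2 * j) j : ℝ)))) := by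
  have hfst := wedgeMoment_fst_branch k
  have hsum := wedgeMoment_snd_branch_add_fst_branch k
  have hD : ((2 * k + 2)! : ℝ) / ((k + 1)! * 2 ^ (k + 1)) = oddDoubleFactorial (k + 1) := rfl
  rw [setIntegral_wedge_fst_branch, setIntegral_wedge_snd_branch]
  simp only [mul_div_assoc, hD]
  rw [← lehmerPartialSum]
  exact ⟨hfst, by linear_combination hsum - hfst⟩

/-- even-moment integrals of the two branches of the continuous
2-watermelon with wall condition. `C(2j,j)` is the central binomial coefficient. -/
theorem melonW2_even_moment_integrals (k : ℕ) (hk : 1 ≤ k) :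
    ((∫ q in {q : ℝ × ℝ | 0 ≤ q.1 ∧ q.1 ≤ q.2},
        q.1 ^ (2 * k) * (q.2 ^ 2 - q.1 ^ 2) ^ 2 * q.1 ^ 2 * q.2 ^ 2 *
          Real.exp (-(q.1 ^ 2 + q.2 ^ 2) / 2))
      = 2 * (3 - (k : ℝ)) * (Nat.factorial (k + 1) : ℝ)
        + ((k : ℝ) ^ 2 + (k : ℝ) + 3) * (Nat.factorial (2 * k + 2) : ℝ)
            / ((Nat.factorial (k + 1) : ℝ) * 2 ^ (k + 1))
          * (Real.pi - 2 * ∑ j ∈ Finset.Icc 1 (k + 1),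
              (2 : ℝ) ^ j / ((j : ℝ) * (Nat.choose (2 * j) j : ℝ))))
    ∧ ((∫ q in {q : ℝ × ℝ | 0 ≤ q.1 ∧ q.1 ≤ q.2},
        q.2 ^ (2 * k) * (q.2 ^ 2 - q.1 ^ 2) ^ 2 * q.1 ^ 2 * q.2 ^ 2 *
          Real.exp (-(q.1 ^ 2 + q.2 ^ 2) / 2))
      = -(2 * (3 - (k : ℝ)) * (Nat.factorial (k + 1) : ℝ))
        + ((k : ℝ) ^ 2 + (k : ℝ) + 3) * (Nat.factorial (2 * k + 2) : ℝ)
            / ((Nat.factorial (k + 1) : ℝ) * 2 ^ (k + 1))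
          * (Real.pi + 2 * ∑ j ∈ Finset.Icc 1 (k + 1),
              (2 : ℝ) ^ j / ((j : ℝ) * (Nat.choose (2 * j) j : ℝ)))) :=
  melonW2_even_moment_integrals_general k
end

section
/- For every integer k ≥ 0 and for each i ∈ {1, 2}: (1/(2π)) · ∫∫_{−∞ < u_1 ≤ u_2 < ∞} u_i^{2k} · (u_2 − u_1)² · exp(−(u_1² + u_2²)/2) du_1 du_2 = (2k)! (k+1) / (2^k · k!). -/
/-!
Under the swap `(x, y) ↦ (y, x)` the first integrand `x^(2k) (y - x)² e^{-(x² + y²)/2}` becomes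
the second, and the reflection `(x, y) ↦ (-y, -x)` preserves the half-plane `x ≤ y` and exchanges
the two integrands. Hence both half-plane integrals are half of the integral of the first integrand
over the whole plane. Expanding `(y - x)²`, that integral factors through the Gaussian moments
`m n = ∫ x^n e^{-x²/2}` as `m (2k+2) * m 0 - 2 * m (2k+1) * m 1 + m (2k) * m 2 = (2k+2) m 0 m (2k)`,
by `m 1 = 0` and the integration by parts `m (n+2) = (n+1) m n`.
-/

open MeasureTheory Real Set
open scoped Nat

theorem integrable_pow_mul_exp_neg_sq_div_two (n : ℕ) :
    Integrable fun x : ℝ => x ^ n * exp (-x ^ 2 / 2) := by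
  have h := integrable_rpow_mul_exp_neg_mul_sq (b := 1 / 2) (by norm_num) (s := n)
    (by linarith [n.cast_nonneg (α := ℝ)])
  refine h.congr (.of_forall fun x => ?_)
  simp only [rpow_natCast]
  ring_nf

theorem integral_exp_neg_sq_div_two : ∫ x : ℝ, exp (-x ^ 2 / 2) = √(2 * π) := by
  convert integral_gaussian (1 / 2) using 2 <;> ring_nf

theorem integral_pow_add_two_mul_exp_neg_sq_div_two (n : ℕ) :
    ∫ x : ℝ, x ^ (n + 2) * exp (-x ^ 2 / 2) = (n + 1) * ∫ x : ℝ, x ^ n * exp (-x ^ 2 / 2) := by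
  have hv (x : ℝ) : HasDerivAt (fun x => -exp (-x ^ 2 / 2)) (x * exp (-x ^ 2 / 2)) x :=
    ((((hasDerivAt_id x).fun_pow 2).fun_neg.div_const 2).exp).fun_neg.congr_deriv (by simp; ring)
  have hM := integrable_pow_mul_exp_neg_sq_div_two
  have h := integral_mul_deriv_eq_deriv_mul_of_integrable
    (u := fun x : ℝ => x ^ (n + 1)) (u' := fun x => (n + 1 : ℝ) * x ^ n)
    (fun x _ => by simpa using hasDerivAt_pow (n + 1) x) (fun x _ => hv x)
    ((hM (n + 2)).congr (.of_forall fun x => by simp only [Pi.mul_apply]; ring))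
    (((hM n).const_mul (-(n + 1 : ℝ))).congr
      (.of_forall fun x => by simp only [Pi.mul_apply]; ring))
    ((hM (n + 1)).neg.congr (.of_forall fun x => by simp only [Pi.mul_apply, Pi.neg_apply]; ring))
  calc ∫ x : ℝ, x ^ (n + 2) * exp (-x ^ 2 / 2)
      = ∫ x : ℝ, x ^ (n + 1) * (x * exp (-x ^ 2 / 2)) := by congr 1; ext x; ring
    _ = (n + 1) * ∫ x : ℝ, x ^ n * exp (-x ^ 2 / 2) := by
      rw [h, ← integral_const_mul, ← integral_neg]; congr 1; ext x; ring

theorem integral_pow_two_mul_mul_exp_neg_sq_div_two (k : ℕ) :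
    ∫ x : ℝ, x ^ (2 * k) * exp (-x ^ 2 / 2) = √(2 * π) * (2 * k)! / (2 ^ k * k !) := by
  induction k with
  | zero => simpa using integral_exp_neg_sq_div_two
  | succ k ih =>
    rw [mul_add_one, integral_pow_add_two_mul_exp_neg_sq_div_two, ih, Nat.factorial_succ,
      show 2 * k + 2 = 2 * k + 1 + 1 by ring, Nat.factorial_succ, Nat.factorial_succ]
    push_cast
    field_simp
    ring

theorem integral_pow_two_mul_add_one_mul_exp_neg_sq_div_two (k : ℕ) :
    ∫ x : ℝ, x ^ (2 * k + 1) * exp (-x ^ 2 / 2) = 0 := by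
  have h := integral_neg_eq_self (fun x : ℝ => x ^ (2 * k + 1) * exp (-x ^ 2 / 2)) volume
  simp only [Odd.neg_pow ⟨k, rfl⟩, neg_sq, neg_mul, integral_neg] at h
  linarith

theorem MeasureTheory.Measure.prod_diagonal_eq_zero {α : Type*} [MeasurableSpace α]
    [MeasurableEq α] (μ ν : Measure α) [SFinite ν] [NullSingletonClass ν] :
    μ.prod ν (diagonal α) = 0 := by
  rw [Measure.measure_prod_null measurableSet_diagonal]
  refine .of_forall fun x => ?_
  have hfiber : Prod.mk x ⁻¹' diagonal α = {x} := by ext; simp [eq_comm]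
  simp [hfiber]

theorem integral_eq_setIntegral_fst_le_snd_add_setIntegral_swap {E : Type*}
    [NormedAddCommGroup E] [NormedSpace ℝ E] {f : ℝ × ℝ → E} (hf : Integrable f) :
    ∫ q, f q =
      (∫ q in {q : ℝ × ℝ | q.1 ≤ q.2}, f q) + ∫ q in {q : ℝ × ℝ | q.1 ≤ q.2}, f q.swap := by
  have hS : MeasurableSet {q : ℝ × ℝ | q.1 ≤ q.2} := measurableSet_le measurable_fst measurable_snd
  have hswap : MeasurePreserving (Prod.swap : ℝ × ℝ → ℝ × ℝ) := Measure.measurePreserving_swap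
  have hcompl : {q : ℝ × ℝ | q.1 ≤ q.2}ᶜ =ᵐ[volume] Prod.swap ⁻¹' {q : ℝ × ℝ | q.1 ≤ q.2} := by
    have hoff : ∀ᵐ q : ℝ × ℝ, q ∉ diagonal ℝ :=
      measure_eq_zero_iff_ae_notMem.mp (Measure.prod_diagonal_eq_zero volume volume)
    filter_upwards [hoff] with q hq
    change (q ∉ {q : ℝ × ℝ | q.1 ≤ q.2}) = (q.2 ≤ q.1)
    simp [lt_iff_le_and_ne, Ne.symm hq]
  have h := hswap.setIntegral_preimage_emb MeasurableEquiv.prodComm.measurableEmbedding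
    (fun q => f q.swap) {q : ℝ × ℝ | q.1 ≤ q.2}
  simp only [Prod.swap_swap] at h
  rw [← integral_add_compl hS hf, ← h]
  congr 1
  exact setIntegral_congr_set hcompl

theorem setIntegral_fst_le_snd_comp_neg_swap {E : Type*} [NormedAddCommGroup E]
    [NormedSpace ℝ E] (f : ℝ × ℝ → E) :
    ∫ q in {q : ℝ × ℝ | q.1 ≤ q.2}, f (-q.swap) = ∫ q in {q : ℝ × ℝ | q.1 ≤ q.2}, f q := by
  have hT : MeasurePreserving (fun q : ℝ × ℝ => -q.swap) :=
    (Measure.measurePreserving_neg volume).comp Measure.measurePreserving_swap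
  have hpre : (fun q : ℝ × ℝ => -q.swap) ⁻¹' {q | q.1 ≤ q.2} = {q | q.1 ≤ q.2} := by
    ext q; simp
  have h := hT.setIntegral_preimage_emb
    ((Homeomorph.neg (ℝ × ℝ)).measurableEmbedding.comp
      MeasurableEquiv.prodComm.measurableEmbedding) f {q | q.1 ≤ q.2}
  rwa [hpre] at h

theorem fst_pow_mul_sub_sq_mul_exp_eq_prod_terms (n : ℕ) (q : ℝ × ℝ) :
    q.1 ^ n * (q.2 - q.1) ^ 2 * exp (-(q.1 ^ 2 + q.2 ^ 2) / 2) =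
      (q.1 ^ (n + 2) * exp (-q.1 ^ 2 / 2)) * (q.2 ^ 0 * exp (-q.2 ^ 2 / 2))
        + (q.1 ^ n * exp (-q.1 ^ 2 / 2)) * (q.2 ^ 2 * exp (-q.2 ^ 2 / 2))
        - 2 * ((q.1 ^ (n + 1) * exp (-q.1 ^ 2 / 2)) * (q.2 ^ 1 * exp (-q.2 ^ 2 / 2))) := by
  rw [show -(q.1 ^ 2 + q.2 ^ 2) / 2 = -q.1 ^ 2 / 2 + -q.2 ^ 2 / 2 by ring, exp_add]
  ring

theorem integrable_pow_mul_exp_neg_sq_div_two_prod (m n : ℕ) :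
    Integrable fun q : ℝ × ℝ => (q.1 ^ m * exp (-q.1 ^ 2 / 2)) * (q.2 ^ n * exp (-q.2 ^ 2 / 2)) :=
  (integrable_pow_mul_exp_neg_sq_div_two m).mul_prod (integrable_pow_mul_exp_neg_sq_div_two n)

theorem integral_pow_mul_exp_neg_sq_div_two_prod (m n : ℕ) :
    ∫ q : ℝ × ℝ, (q.1 ^ m * exp (-q.1 ^ 2 / 2)) * (q.2 ^ n * exp (-q.2 ^ 2 / 2)) =
      (∫ x : ℝ, x ^ m * exp (-x ^ 2 / 2)) * ∫ x : ℝ, x ^ n * exp (-x ^ 2 / 2) :=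
  integral_prod_mul (fun x : ℝ => x ^ m * exp (-x ^ 2 / 2)) (fun x : ℝ => x ^ n * exp (-x ^ 2 / 2))

theorem integrable_fst_pow_mul_sub_sq_mul_exp (n : ℕ) :
    Integrable fun q : ℝ × ℝ => q.1 ^ n * (q.2 - q.1) ^ 2 * exp (-(q.1 ^ 2 + q.2 ^ 2) / 2) := by
  simp_rw [fst_pow_mul_sub_sq_mul_exp_eq_prod_terms]
  have h := integrable_pow_mul_exp_neg_sq_div_two_prod
  exact ((h _ _).fun_add (h _ _)).sub ((h _ _).const_mul 2)

theorem integral_fst_pow_mul_sub_sq_mul_exp (n : ℕ) :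
    ∫ q : ℝ × ℝ, q.1 ^ n * (q.2 - q.1) ^ 2 * exp (-(q.1 ^ 2 + q.2 ^ 2) / 2) =
      (n + 2) * √(2 * π) * ∫ x : ℝ, x ^ n * exp (-x ^ 2 / 2) := by
  simp_rw [fst_pow_mul_sub_sq_mul_exp_eq_prod_terms]
  have h := integrable_pow_mul_exp_neg_sq_div_two_prod
  rw [integral_sub ((h _ _).fun_add (h _ _)) ((h _ _).const_mul 2), integral_add (h _ _) (h _ _),
    integral_const_mul, integral_pow_mul_exp_neg_sq_div_two_prod,
    integral_pow_mul_exp_neg_sq_div_two_prod, integral_pow_mul_exp_neg_sq_div_two_prod,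
    integral_pow_add_two_mul_exp_neg_sq_div_two, integral_pow_add_two_mul_exp_neg_sq_div_two 0]
  have h1 := integral_pow_two_mul_add_one_mul_exp_neg_sq_div_two 0
  simp only [pow_zero, one_mul, mul_zero, zero_add, pow_one] at h1 ⊢
  rw [h1, integral_exp_neg_sq_div_two]
  ring

/-- even-moment integrals of the two branches of the continuous
2-watermelon without wall condition. -/
theorem melonNW2_even_moment_integrals (k : ℕ) :
    (1 / (2 * Real.pi) *
        (∫ q in {q : ℝ × ℝ | q.1 ≤ q.2},
          q.1 ^ (2 * k) * (q.2 - q.1) ^ 2 * Real.exp (-(q.1 ^ 2 + q.2 ^ 2) / 2))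
      = (Nat.factorial (2 * k) : ℝ) * ((k : ℝ) + 1) / (2 ^ k * (Nat.factorial k : ℝ)))
    ∧ (1 / (2 * Real.pi) *
        (∫ q in {q : ℝ × ℝ | q.1 ≤ q.2},
          q.2 ^ (2 * k) * (q.2 - q.1) ^ 2 * Real.exp (-(q.1 ^ 2 + q.2 ^ 2) / 2))
      = (Nat.factorial (2 * k) : ℝ) * ((k : ℝ) + 1) / (2 ^ k * (Nat.factorial k : ℝ))) := by
  have hswap : ∫ q in {q : ℝ × ℝ | q.1 ≤ q.2}, q.swap.1 ^ (2 * k) * (q.swap.2 - q.swap.1) ^ 2 *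
        exp (-(q.swap.1 ^ 2 + q.swap.2 ^ 2) / 2) =
      ∫ q in {q : ℝ × ℝ | q.1 ≤ q.2},
        q.2 ^ (2 * k) * (q.2 - q.1) ^ 2 * exp (-(q.1 ^ 2 + q.2 ^ 2) / 2) := by
    congr 1; ext q; simp only [Prod.fst_swap, Prod.snd_swap]; ring_nf
  have hreflect : ∫ q in {q : ℝ × ℝ | q.1 ≤ q.2},
        q.2 ^ (2 * k) * (q.2 - q.1) ^ 2 * exp (-(q.1 ^ 2 + q.2 ^ 2) / 2) =
      ∫ q in {q : ℝ × ℝ | q.1 ≤ q.2},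
        q.1 ^ (2 * k) * (q.2 - q.1) ^ 2 * exp (-(q.1 ^ 2 + q.2 ^ 2) / 2) := by
    rw [← setIntegral_fst_le_snd_comp_neg_swap]
    congr 1; ext q
    simp only [Prod.fst_neg, Prod.snd_neg, Prod.fst_swap, Prod.snd_swap,
      Even.neg_pow ⟨k, two_mul k⟩]
    ring_nf
  have htotal := integral_eq_setIntegral_fst_le_snd_add_setIntegral_swap
    (integrable_fst_pow_mul_sub_sq_mul_exp (2 * k))
  rw [hswap, hreflect, integral_fst_pow_mul_sub_sq_mul_exp,
    integral_pow_two_mul_mul_exp_neg_sq_div_two] at htotal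
  have hsqrt : √(2 * π) * √(2 * π) = 2 * π := mul_self_sqrt (by positivity)
  have hval : ∫ q in {q : ℝ × ℝ | q.1 ≤ q.2},
      q.1 ^ (2 * k) * (q.2 - q.1) ^ 2 * exp (-(q.1 ^ 2 + q.2 ^ 2) / 2) =
        2 * π * ((2 * k)! * (k + 1) / (2 ^ k * k !)) := by
    push_cast at htotal
    linear_combination (-1 / 2 : ℝ) * htotal + ((k + 1) * (2 * k)! / (2 ^ k * k !) : ℝ) * hsqrt
  rw [hreflect, hval, one_div, inv_mul_cancel_left₀ two_pi_pos.ne', and_self]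
end

section
/- For every integer k ≥ 0: (1/(2π)) · ∫∫_{−∞ < u_1 ≤ u_2 < ∞} u_2^{2k+1} · (u_2 − u_1)² · exp(−(u_1² + u_2²)/2) du_1 du_2 = [ (2k+2)! / ( 2^{2k+1} (k+1)! ) + (2k+3) · 2^k · k! · ∑_{j=0}^{k} C(2j, j)/2^{3j} ] / (2√π), and the corresponding integral with u_1^{2k+1} in place of u_2^{2k+1} equals the negative of this value. -/
/-!
Write `g x = exp (-x²/2)` and `Φ y = ∫_{x ≤ y} g x`. Integrating out the lower coordinate first,
one integration by parts gives `∫_{x ≤ y} (y - x)² g x = (y² + 1) Φ y + y g y`, so the upper-branch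
integral equals `T (2k+3) + T (2k+1) + ∫ y^(2k+2) e^(-y²)` with `T m = ∫ y^m g y Φ y`. A second
integration by parts (`Φ' = g`) gives `T (m+1) = m T (m-1) + ∫ y^m e^(-y²)`, and with the Gaussian
moments `∫ x^(2n) e^(-x²) = √π (2n)! / (4^n n!)` the recursion for odd `m` unrolls into the sum of
central binomial coefficients. The map `(x, y) ↦ (-y, -x)` preserves `{x ≤ y}` and exchanges the two
branches up to the sign `(-1)^(2k+1)`.
-/

open MeasureTheory

open Real Set Filter

namespace MelonNW2

lemma integrable_pow_mul_exp_neg_mul_sq {b : ℝ} (hb : 0 < b) (m : ℕ) :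
    Integrable fun x : ℝ => x ^ m * exp (-b * x ^ 2) := by
  simpa using integrable_rpow_mul_exp_neg_mul_sq hb (s := m) (by linarith [m.cast_nonneg (α := ℝ)])

lemma integrable_pow_mul_exp_neg_sq_div_two (m : ℕ) :
    Integrable fun x : ℝ => x ^ m * exp (-x ^ 2 / 2) := by
  simpa [neg_div, div_eq_inv_mul] using
    integrable_pow_mul_exp_neg_mul_sq (b := 1 / 2) (by norm_num) m

lemma integrable_pow_mul_exp_neg_sq (m : ℕ) : Integrable fun x : ℝ => x ^ m * exp (-x ^ 2) := by
  simpa using integrable_pow_mul_exp_neg_mul_sq one_pos m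

lemma integrable_exp_neg_sq_div_two : Integrable fun x : ℝ => exp (-x ^ 2 / 2) := by
  simpa using integrable_pow_mul_exp_neg_sq_div_two 0

lemma integral_pow_add_two_mul_exp_neg_mul_sq {b : ℝ} (hb : 0 < b) (m : ℕ) :
    ∫ x : ℝ, x ^ (m + 2) * exp (-b * x ^ 2) =
      (m + 1) / (2 * b) * ∫ x : ℝ, x ^ m * exp (-b * x ^ 2) := by
  have hderiv (x : ℝ) : HasDerivAt (fun x => x ^ (m + 1) * exp (-b * x ^ 2))
      ((m + 1) * (x ^ m * exp (-b * x ^ 2)) - 2 * b * (x ^ (m + 2) * exp (-b * x ^ 2))) x := by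
    refine ((hasDerivAt_pow (m + 1) x).mul
      (((hasDerivAt_pow 2 x).const_mul (-b)).exp)).congr_deriv ?_
    push_cast
    ring
  have hint := integrable_pow_mul_exp_neg_mul_sq hb
  have hzero := integral_eq_zero_of_hasDerivAt_of_integrable hderiv
    (((hint m).const_mul _).sub ((hint (m + 2)).const_mul _)) (hint (m + 1))
  rw [integral_sub ((hint m).const_mul _) ((hint (m + 2)).const_mul _), integral_const_mul,
    integral_const_mul, sub_eq_zero] at hzero
  rw [div_mul_eq_mul_div, hzero]
  field_simp

lemma integral_pow_two_mul_mul_exp_neg_sq (n : ℕ) :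
    ∫ x : ℝ, x ^ (2 * n) * exp (-x ^ 2) = √π * (2 * n).factorial / (4 ^ n * n.factorial) := by
  induction n with
  | zero => simpa using integral_gaussian 1
  | succ n ih =>
    have h := integral_pow_add_two_mul_exp_neg_mul_sq one_pos (2 * n)
    simp only [neg_one_mul] at h
    rw [show 2 * (n + 1) = 2 * n + 2 by ring, h, ih, Nat.factorial_succ (2 * n + 1),
      Nat.factorial_succ (2 * n), Nat.factorial_succ n]
    push_cast
    field_simp
    ring

lemma hasDerivAt_exp_neg_sq_div_two (x : ℝ) :
    HasDerivAt (fun x => exp (-x ^ 2 / 2)) (-x * exp (-x ^ 2 / 2)) x := by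
  have h : HasDerivAt (fun x : ℝ => -x ^ 2 / 2) (-x) x := by
    refine ((hasDerivAt_pow 2 x).neg.div_const 2).congr_deriv ?_
    push_cast
    ring
  simpa [mul_comm] using h.exp

lemma exp_neg_sq_div_two_mul_self (x : ℝ) : exp (-x ^ 2 / 2) * exp (-x ^ 2 / 2) = exp (-x ^ 2) := by
  rw [← exp_add]
  ring_nf

lemma exp_neg_add_sq_div_two (x y : ℝ) :
    exp (-(x ^ 2 + y ^ 2) / 2) = exp (-x ^ 2 / 2) * exp (-y ^ 2 / 2) := by
  rw [← exp_add]
  ring_nf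

/-- Not normalized: the total mass is `√(2π)`. -/
noncomputable def gaussCDF (y : ℝ) : ℝ := ∫ x in Iic y, exp (-x ^ 2 / 2)

lemma hasDerivAt_gaussCDF (y : ℝ) : HasDerivAt gaussCDF (exp (-y ^ 2 / 2)) y := by
  have hint := integrable_exp_neg_sq_div_two
  have hsplit : gaussCDF = fun y => gaussCDF 0 + ∫ x in (0)..y, exp (-x ^ 2 / 2) := by
    funext y
    rw [← intervalIntegral.integral_Iic_sub_Iic hint.integrableOn hint.integrableOn]
    simp [gaussCDF]
  rw [hsplit]
  exact ((Continuous.integral_hasStrictDerivAt (by fun_prop) 0 y).hasDerivAt).const_add _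

lemma continuous_gaussCDF : Continuous gaussCDF :=
  continuous_iff_continuousAt.2 fun y => (hasDerivAt_gaussCDF y).continuousAt

lemma abs_gaussCDF_le (y : ℝ) : |gaussCDF y| ≤ ∫ x, exp (-x ^ 2 / 2) := by
  rw [gaussCDF, abs_of_nonneg (setIntegral_nonneg measurableSet_Iic fun x _ => (exp_pos _).le)]
  exact setIntegral_le_integral integrable_exp_neg_sq_div_two
    (Eventually.of_forall fun x => (exp_pos _).le)

lemma integrable_pow_mul_exp_neg_sq_div_two_mul_gaussCDF (m : ℕ) :
    Integrable fun y : ℝ => y ^ m * exp (-y ^ 2 / 2) * gaussCDF y :=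
  (integrable_pow_mul_exp_neg_sq_div_two m).mul_bdd continuous_gaussCDF.aestronglyMeasurable
    (Eventually.of_forall abs_gaussCDF_le)

noncomputable def gaussCDFMoment (m : ℕ) : ℝ := ∫ y, y ^ m * exp (-y ^ 2 / 2) * gaussCDF y

-- For `m = 0` the truncated `m - 1` only appears multiplied by `0`.
lemma gaussCDFMoment_succ (m : ℕ) :
    gaussCDFMoment (m + 1) = m * gaussCDFMoment (m - 1) + ∫ y : ℝ, y ^ m * exp (-y ^ 2) := by
  have hderiv (y : ℝ) : HasDerivAt (fun y => y ^ m * exp (-y ^ 2 / 2) * gaussCDF y)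
      (m * (y ^ (m - 1) * exp (-y ^ 2 / 2) * gaussCDF y)
        - y ^ (m + 1) * exp (-y ^ 2 / 2) * gaussCDF y + y ^ m * exp (-y ^ 2)) y := by
    refine (((hasDerivAt_pow m y).mul (hasDerivAt_exp_neg_sq_div_two y)).mul
      (hasDerivAt_gaussCDF y)).congr_deriv ?_
    simp only [Pi.mul_apply]
    linear_combination y ^ m * exp_neg_sq_div_two_mul_self y
  have hint := integrable_pow_mul_exp_neg_sq_div_two_mul_gaussCDF
  have hconst := (hint (m - 1)).const_mul (m : ℝ)
  have hzero := integral_eq_zero_of_hasDerivAt_of_integrable hderiv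
    ((hconst.sub (hint (m + 1))).add (integrable_pow_mul_exp_neg_sq m)) (hint m)
  rw [integral_add, integral_sub, integral_const_mul] at hzero
  · rw [gaussCDFMoment, gaussCDFMoment]
    linarith
  exacts [hconst, hint (m + 1), hconst.sub (hint (m + 1)), integrable_pow_mul_exp_neg_sq m]

lemma gaussCDFMoment_two_mul_add_one (n : ℕ) :
    gaussCDFMoment (2 * n + 1) =
      √π * n.factorial * 2 ^ n *
        ∑ j ∈ Finset.range (n + 1), ((2 * j).choose j : ℝ) / 2 ^ (3 * j) := by
  induction n with
  | zero =>
    rw [gaussCDFMoment_succ]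
    simpa using integral_pow_two_mul_mul_exp_neg_sq 0
  | succ n ih =>
    have hchoose : ((2 * (n + 1)).choose (n + 1) : ℝ) * (n + 1).factorial * (n + 1).factorial =
        (2 * (n + 1)).factorial := by
      rw [two_mul]
      exact_mod_cast Nat.add_choose_mul_factorial_mul_factorial (n + 1) (n + 1)
    have hpow : (2 : ℝ) ^ (3 * (n + 1)) = 4 ^ (n + 1) * 2 ^ (n + 1) := by
      rw [← mul_pow, pow_mul]
      norm_num
    rw [gaussCDFMoment_succ, show 2 * (n + 1) - 1 = 2 * n + 1 by omega, ih,
      integral_pow_two_mul_mul_exp_neg_sq, Finset.sum_range_succ _ (n + 1), ← hchoose, hpow,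
      Nat.factorial_succ]
    push_cast
    field_simp
    ring

lemma setIntegral_Iic_sub_sq_mul_exp_neg_sq_div_two (y : ℝ) :
    ∫ x in Iic y, (y - x) ^ 2 * exp (-x ^ 2 / 2) =
      (y ^ 2 + 1) * gaussCDF y + y * exp (-y ^ 2 / 2) := by
  have h (m : ℕ) := integrable_pow_mul_exp_neg_sq_div_two m
  have hsq : Integrable fun x : ℝ => (y - x) ^ 2 * exp (-x ^ 2 / 2) :=
    (((h 0).const_mul (y ^ 2)).sub ((h 1).const_mul (2 * y))).add (h 2) |>.congr
      (Eventually.of_forall fun x => by simp only [Pi.add_apply, Pi.sub_apply]; ring)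
  have hgauss : Integrable fun x : ℝ => (y ^ 2 + 1) * exp (-x ^ 2 / 2) := by
    simpa using (h 0).const_mul (y ^ 2 + 1)
  have hderiv (x : ℝ) : HasDerivAt (fun x => (2 * y - x) * exp (-x ^ 2 / 2))
      ((y - x) ^ 2 * exp (-x ^ 2 / 2) - (y ^ 2 + 1) * exp (-x ^ 2 / 2)) x := by
    refine (((hasDerivAt_id' x).const_sub (2 * y)).mul
      (hasDerivAt_exp_neg_sq_div_two x)).congr_deriv ?_
    ring
  have hanti : Integrable fun x : ℝ => (2 * y - x) * exp (-x ^ 2 / 2) :=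
    (((h 0).const_mul (2 * y)).sub (h 1)).congr
      (Eventually.of_forall fun x => by simp only [Pi.sub_apply]; ring)
  have hlim := tendsto_zero_of_hasDerivAt_of_integrableOn_Iic (a := y) (fun x _ => hderiv x)
    (hsq.sub hgauss).integrableOn hanti.integrableOn
  have hftc := integral_Iic_of_hasDerivAt_of_tendsto' (a := y) (fun x _ => hderiv x)
    (hsq.sub hgauss).integrableOn hlim
  rw [integral_sub hsq.integrableOn hgauss.integrableOn, integral_const_mul] at hftc
  rw [gaussCDF]
  linear_combination hftc

lemma setIntegral_fst_le_snd {E : Type*} [NormedAddCommGroup E] [NormedSpace ℝ E]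
    {μ ν : Measure ℝ} [SFinite μ] [SFinite ν] {F : ℝ × ℝ → E} (hF : Integrable F (μ.prod ν)) :
    ∫ q in {q : ℝ × ℝ | q.1 ≤ q.2}, F q ∂(μ.prod ν) = ∫ y, ∫ x in Iic y, F (x, y) ∂μ ∂ν := by
  have hmeas : MeasurableSet {q : ℝ × ℝ | q.1 ≤ q.2} :=
    measurableSet_le measurable_fst measurable_snd
  rw [← integral_indicator hmeas, integral_prod_symm _ (hF.indicator hmeas)]
  congr 1 with y
  rw [← integral_indicator measurableSet_Iic]
  rfl

lemma setIntegral_fst_le_snd_comp_neg_swap {E : Type*} [NormedAddCommGroup E] [NormedSpace ℝ E]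
    (f : ℝ × ℝ → E) :
    ∫ q in {q : ℝ × ℝ | q.1 ≤ q.2}, f (-q.2, -q.1) = ∫ q in {q : ℝ × ℝ | q.1 ≤ q.2}, f q := by
  let e : ℝ × ℝ ≃ᵐ ℝ × ℝ := MeasurableEquiv.prodComm.trans (MeasurableEquiv.neg (ℝ × ℝ))
  have he : MeasurePreserving e volume volume := by
    refine (Measure.measurePreserving_neg volume).comp ?_
    rw [Measure.volume_eq_prod]
    exact Measure.measurePreserving_swap
  have he_apply (q : ℝ × ℝ) : e q = (-q.2, -q.1) := rfl
  have hpre : e ⁻¹' {q : ℝ × ℝ | q.1 ≤ q.2} = {q : ℝ × ℝ | q.1 ≤ q.2} := by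
    ext q
    simp [he_apply]
  simpa [hpre, he_apply] using he.setIntegral_preimage_emb e.measurableEmbedding f {q | q.1 ≤ q.2}

lemma integrable_pow_snd_mul_sub_sq_mul_exp (m : ℕ) :
    Integrable fun q : ℝ × ℝ => q.2 ^ m * (q.2 - q.1) ^ 2 * exp (-(q.1 ^ 2 + q.2 ^ 2) / 2) := by
  have hprod (i j : ℕ) : Integrable fun q : ℝ × ℝ =>
      (q.1 ^ i * exp (-q.1 ^ 2 / 2)) * (q.2 ^ j * exp (-q.2 ^ 2 / 2)) := by
    rw [Measure.volume_eq_prod]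
    exact (integrable_pow_mul_exp_neg_sq_div_two i).mul_prod
      (integrable_pow_mul_exp_neg_sq_div_two j)
  refine (((hprod 2 m).sub ((hprod 1 (m + 1)).const_mul 2)).add (hprod 0 (m + 2))).congr
    (Eventually.of_forall fun q => ?_)
  simp only [Pi.add_apply, Pi.sub_apply]
  rw [exp_neg_add_sq_div_two]
  ring

lemma integral_lower_branch_eq_neg_upper {m : ℕ} (hm : Odd m) :
    ∫ q in {q : ℝ × ℝ | q.1 ≤ q.2}, q.1 ^ m * (q.2 - q.1) ^ 2 * exp (-(q.1 ^ 2 + q.2 ^ 2) / 2) =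
      -∫ q in {q : ℝ × ℝ | q.1 ≤ q.2},
        q.2 ^ m * (q.2 - q.1) ^ 2 * exp (-(q.1 ^ 2 + q.2 ^ 2) / 2) := by
  rw [← setIntegral_fst_le_snd_comp_neg_swap, ← integral_neg]
  congr with q
  rw [hm.neg_pow]
  ring_nf

lemma integral_upper_branch_odd (k : ℕ) :
    ∫ q in {q : ℝ × ℝ | q.1 ≤ q.2},
        q.2 ^ (2 * k + 1) * (q.2 - q.1) ^ 2 * exp (-(q.1 ^ 2 + q.2 ^ 2) / 2) =
      √π * ((2 * k + 3) * k.factorial * 2 ^ k *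
          ∑ j ∈ Finset.range (k + 1), ((2 * j).choose j : ℝ) / 2 ^ (3 * j) +
        2 * ((2 * k + 2).factorial / (4 ^ (k + 1) * (k + 1).factorial))) := by
  have hinner (y : ℝ) :
      ∫ x in Iic y, y ^ (2 * k + 1) * (y - x) ^ 2 * exp (-(x ^ 2 + y ^ 2) / 2) =
        y ^ (2 * k + 3) * exp (-y ^ 2 / 2) * gaussCDF y +
          y ^ (2 * k + 1) * exp (-y ^ 2 / 2) * gaussCDF y + y ^ (2 * k + 2) * exp (-y ^ 2) := by
    calc ∫ x in Iic y, y ^ (2 * k + 1) * (y - x) ^ 2 * exp (-(x ^ 2 + y ^ 2) / 2)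
        = ∫ x in Iic y, y ^ (2 * k + 1) * exp (-y ^ 2 / 2) * ((y - x) ^ 2 * exp (-x ^ 2 / 2)) := by
          congr with x
          rw [exp_neg_add_sq_div_two]
          ring
      _ = y ^ (2 * k + 1) * exp (-y ^ 2 / 2) *
            ((y ^ 2 + 1) * gaussCDF y + y * exp (-y ^ 2 / 2)) := by
          rw [integral_const_mul, setIntegral_Iic_sub_sq_mul_exp_neg_sq_div_two]
      _ = _ := by
          rw [← exp_neg_sq_div_two_mul_self]
          ring
  have hT := gaussCDFMoment_succ (2 * k + 2)
  have hM := integral_pow_two_mul_mul_exp_neg_sq (k + 1)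
  rw [show 2 * k + 2 - 1 = 2 * k + 1 by omega, show 2 * k + 2 + 1 = 2 * k + 3 by ring] at hT
  rw [show 2 * (k + 1) = 2 * k + 2 by ring] at hM
  have hint := integrable_pow_mul_exp_neg_sq_div_two_mul_gaussCDF
  rw [Measure.volume_eq_prod, setIntegral_fst_le_snd (by
    rw [← Measure.volume_eq_prod]; exact integrable_pow_snd_mul_sub_sq_mul_exp (2 * k + 1))]
  simp only [hinner]
  rw [integral_add, integral_add]
  · change gaussCDFMoment (2 * k + 3) + gaussCDFMoment (2 * k + 1) + _ = _
    rw [hT, hM, gaussCDFMoment_two_mul_add_one]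
    push_cast
    ring
  exacts [hint _, hint _, (hint _).add (hint _), integrable_pow_mul_exp_neg_sq _]

end MelonNW2

/-- odd-moment integrals of the two branches of the continuous
2-watermelon without wall condition. `C(2j,j)` is the central binomial coefficient. -/
theorem melonNW2_odd_moment_integrals (k : ℕ) :
    (1 / (2 * Real.pi) *
        (∫ q in {q : ℝ × ℝ | q.1 ≤ q.2},
          q.2 ^ (2 * k + 1) * (q.2 - q.1) ^ 2 * Real.exp (-(q.1 ^ 2 + q.2 ^ 2) / 2))
      = ((Nat.factorial (2 * k + 2) : ℝ) / (2 ^ (2 * k + 1) * (Nat.factorial (k + 1) : ℝ))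
            + (2 * (k : ℝ) + 3) * 2 ^ k * (Nat.factorial k : ℝ) *
              ∑ j ∈ Finset.range (k + 1), (Nat.choose (2 * j) j : ℝ) / 2 ^ (3 * j))
          / (2 * Real.sqrt Real.pi))
    ∧ (1 / (2 * Real.pi) *
        (∫ q in {q : ℝ × ℝ | q.1 ≤ q.2},
          q.1 ^ (2 * k + 1) * (q.2 - q.1) ^ 2 * Real.exp (-(q.1 ^ 2 + q.2 ^ 2) / 2))
      = -(((Nat.factorial (2 * k + 2) : ℝ) / (2 ^ (2 * k + 1) * (Nat.factorial (k + 1) : ℝ))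
            + (2 * (k : ℝ) + 3) * 2 ^ k * (Nat.factorial k : ℝ) *
              ∑ j ∈ Finset.range (k + 1), (Nat.choose (2 * j) j : ℝ) / 2 ^ (3 * j))
          / (2 * Real.sqrt Real.pi))) := by
  rw [MelonNW2.integral_lower_branch_eq_neg_upper (odd_two_mul_add_one k), mul_neg, neg_inj,
    and_self, MelonNW2.integral_upper_branch_odd]
  have hπ : 2 * Real.pi = 2 * √Real.pi * √Real.pi := by
    rw [mul_assoc, Real.mul_self_sqrt Real.pi_pos.le]
  have h4 : (4 : ℝ) ^ (k + 1) = 2 * 2 ^ (2 * k + 1) := by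
    rw [show (4 : ℝ) = 2 ^ 2 by norm_num, ← pow_mul]
    ring
  rw [h4, hπ]
  field_simp
  ring
end
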